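/- arXiv:2006.07831 — 13 statements merged into one kernel-verified Lean document; each statement's English description precedes it below -/
import Mathlib

section
/- In the noisy-pair model with class transition matrix T (size c×c, c ≥ 2), the conditional probability that the noisy similarity label equals 1 given that the clean similarity label equals 1 satisfies T_{s,11} := P(H̄ = 1 | H = 1) = ‖T‖_Fro² / c, where ‖T‖_Fro² = Σ_{i,j} T_{ij}² is the squared Frobenius norm of T. -/
/- The probability of an event `A` (on quadruples `(i₁, j₁, i₂, j₂)` of clean/noisy class
labels for two independent points) in the noisy-pair model with class transition matrix `T`
and uniform class priors: each quadruple has probability `(1/c²) · T i₁ j₁ · T i₂ j₂`. -/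
open Classical in
noncomputable def noisyPairProb (c : ℕ) (T : Matrix (Fin c) (Fin c) ℝ)
    (A : Fin c → Fin c → Fin c → Fin c → Prop) : ℝ :=
  ∑ i₁ : Fin c, ∑ j₁ : Fin c, ∑ i₂ : Fin c, ∑ j₂ : Fin c,
    if A i₁ j₁ i₂ j₂ then (1 / (c : ℝ) ^ 2) * T i₁ j₁ * T i₂ j₂ else 0

/-! Given `i₁ = i₂ = i`, the two noisy labels are independent draws from row `i` of `T`, so
`P(H̄ = 1, H = 1) = c⁻² ∑ᵢ ∑ⱼ Tᵢⱼ²` while `P(H = 1) = c⁻² ∑ᵢ (∑ⱼ Tᵢⱼ)² = c⁻² · c`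
by stochasticity of the rows; the factor `c⁻²` cancels in the ratio. -/

theorem noisyPairProb_same_clean_and_noisy (c : ℕ) (T : Matrix (Fin c) (Fin c) ℝ) :
    noisyPairProb c T (fun i₁ j₁ i₂ j₂ => i₁ = i₂ ∧ j₁ = j₂) =
      (∑ i, ∑ j, T i j ^ 2) / (c : ℝ) ^ 2 := by
  simp only [noisyPairProb, one_div, ite_and, Finset.sum_ite_irrel, Finset.sum_const_zero,
    Finset.sum_ite_eq, Finset.mem_univ, if_true, Finset.sum_div]
  refine Finset.sum_congr rfl fun i _ => Finset.sum_congr rfl fun j _ => ?_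
  ring

theorem noisyPairProb_same_clean (c : ℕ) (T : Matrix (Fin c) (Fin c) ℝ) :
    noisyPairProb c T (fun i₁ _ i₂ _ => i₁ = i₂) =
      (∑ i, (∑ j, T i j) ^ 2) / (c : ℝ) ^ 2 := by
  simp only [noisyPairProb, Finset.sum_ite_irrel, Finset.sum_const_zero, Finset.sum_ite_eq,
    Finset.mem_univ, if_true, Finset.sum_div]
  refine Finset.sum_congr rfl fun i _ => ?_
  simp only [sq (∑ j, T i j), Finset.sum_mul, Finset.mul_sum, Finset.sum_div]
  refine Finset.sum_congr rfl fun j _ => Finset.sum_congr rfl fun k _ => ?_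
  ring

theorem Ts11_eq_frobenius_div_c_general (c : ℕ) (T : Matrix (Fin c) (Fin c) ℝ)
    (hrow : ∀ i, ∑ j, T i j = 1) :
    noisyPairProb c T (fun i₁ j₁ i₂ j₂ => i₁ = i₂ ∧ j₁ = j₂) /
        noisyPairProb c T (fun i₁ _ i₂ _ => i₁ = i₂) =
      (∑ i, ∑ j, (T i j) ^ 2) / (c : ℝ) := by
  rcases eq_or_ne c 0 with rfl | hc
  · simp [noisyPairProb] -- both sides are `0 / 0 = 0`
  rw [noisyPairProb_same_clean_and_noisy, noisyPairProb_same_clean]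
  simp only [hrow, one_pow, Finset.sum_const, Finset.card_univ, Fintype.card_fin, nsmul_eq_mul,
    mul_one]
  rw [div_div_div_cancel_right₀ (by positivity)]

/-- In the noisy-pair model, `T_{s,11} = P(H̄ = 1 | H = 1) = ‖T‖_Fro² / c`. -/
theorem Ts11_eq_frobenius_div_c (c : ℕ) (hc : 2 ≤ c) (T : Matrix (Fin c) (Fin c) ℝ)
    (hpos : ∀ i j, 0 ≤ T i j) (hrow : ∀ i, ∑ j, T i j = 1) :
    noisyPairProb c T (fun i₁ j₁ i₂ j₂ => i₁ = i₂ ∧ j₁ = j₂) /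
        noisyPairProb c T (fun i₁ _ i₂ _ => i₁ = i₂) =
      (∑ i, ∑ j, (T i j) ^ 2) / (c : ℝ) :=
  Ts11_eq_frobenius_div_c_general c T hrow
end

section
/- In the noisy-pair model with class transition matrix T (size c×c, c ≥ 2), the conditional probability that the noisy similarity label equals 0 given that the clean similarity label equals 1 satisfies T_{s,10} := P(H̄ = 0 | H = 1) = (c − ‖T‖_Fro²) / c, where ‖T‖_Fro² = Σ_{i,j} T_{ij}². -/
/-! Conditioning on `H = 1` forces both points into one class `i`, after which the noisy labels
are independent draws from row `i` of `T`. Since the rows are distributions, `P(H = 1) = 1/c`,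
and the noisy labels of a same-class pair agree with probability `∑ⱼ T i j²`, so
`P(H = 1, H̄ = 0) = (c - ‖T‖_Fro²) / c²`. -/

theorem noisyPairProb_and_not_eq_sub (c : ℕ) (T : Matrix (Fin c) (Fin c) ℝ)
    (A B : Fin c → Fin c → Fin c → Fin c → Prop) :
    noisyPairProb c T (fun i₁ j₁ i₂ j₂ => A i₁ j₁ i₂ j₂ ∧ ¬ B i₁ j₁ i₂ j₂) =
      noisyPairProb c T A -
        noisyPairProb c T (fun i₁ j₁ i₂ j₂ => A i₁ j₁ i₂ j₂ ∧ B i₁ j₁ i₂ j₂) := by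
  simp only [noisyPairProb, ← Finset.sum_sub_distrib]
  refine Finset.sum_congr rfl fun i₁ _ => Finset.sum_congr rfl fun j₁ _ =>
    Finset.sum_congr rfl fun i₂ _ => Finset.sum_congr rfl fun j₂ _ => ?_
  split_ifs <;> simp_all

theorem noisyPairProb_class_eq_and (c : ℕ) (T : Matrix (Fin c) (Fin c) ℝ)
    (B : Fin c → Fin c → Prop) [DecidableRel B] :
    noisyPairProb c T (fun i₁ j₁ i₂ j₂ => i₁ = i₂ ∧ B j₁ j₂) =
      1 / (c : ℝ) ^ 2 * ∑ i, ∑ j₁, ∑ j₂, if B j₁ j₂ then T i j₁ * T i j₂ else 0 := by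
  simp only [noisyPairProb, Finset.mul_sum]
  refine Finset.sum_congr rfl fun i _ => Finset.sum_congr rfl fun j₁ _ => ?_
  rw [Finset.sum_eq_single i]
  · refine Finset.sum_congr rfl fun j₂ _ => ?_
    split_ifs <;> simp_all [mul_assoc]
  · intro i₂ _ hi
    simp [Ne.symm hi]
  · simp

theorem noisyPairProb_class_eq_and_label_eq (c : ℕ) (T : Matrix (Fin c) (Fin c) ℝ) :
    noisyPairProb c T (fun i₁ j₁ i₂ j₂ => i₁ = i₂ ∧ j₁ = j₂) =
      1 / (c : ℝ) ^ 2 * ∑ i, ∑ j, T i j ^ 2 := by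
  simp [noisyPairProb_class_eq_and, sq]

theorem noisyPairProb_class_eq (c : ℕ) (T : Matrix (Fin c) (Fin c) ℝ) :
    noisyPairProb c T (fun i₁ _ i₂ _ => i₁ = i₂) =
      1 / (c : ℝ) ^ 2 * ∑ i, (∑ j, T i j) ^ 2 := by
  simpa [sq, Finset.sum_mul_sum] using noisyPairProb_class_eq_and c T (fun _ _ => True)

theorem Ts10_eq_general (c : ℕ) (hc : 2 ≤ c) (T : Matrix (Fin c) (Fin c) ℝ)
    (hrow : ∀ i, ∑ j, T i j = 1) :
    noisyPairProb c T (fun i₁ j₁ i₂ j₂ => i₁ = i₂ ∧ j₁ ≠ j₂) /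
        noisyPairProb c T (fun i₁ _ i₂ _ => i₁ = i₂) =
      ((c : ℝ) - ∑ i, ∑ j, (T i j) ^ 2) / (c : ℝ) := by
  have hc0 : (c : ℝ) ≠ 0 := Nat.cast_ne_zero.mpr (by omega)
  rw [noisyPairProb_and_not_eq_sub c T (fun i₁ _ i₂ _ => i₁ = i₂) (fun _ j₁ _ j₂ => j₁ = j₂),
    noisyPairProb_class_eq_and_label_eq, noisyPairProb_class_eq]
  simp only [hrow, one_pow, Finset.sum_const, Finset.card_univ, Fintype.card_fin, nsmul_eq_mul,
    mul_one]
  field_simp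

/-- In the noisy-pair model, `T_{s,10} = P(H̄ = 0 | H = 1) = (c − ‖T‖_Fro²) / c`. -/
theorem Ts10_eq (c : ℕ) (hc : 2 ≤ c) (T : Matrix (Fin c) (Fin c) ℝ)
    (hpos : ∀ i j, 0 ≤ T i j) (hrow : ∀ i, ∑ j, T i j = 1) :
    noisyPairProb c T (fun i₁ j₁ i₂ j₂ => i₁ = i₂ ∧ j₁ ≠ j₂) /
        noisyPairProb c T (fun i₁ _ i₂ _ => i₁ = i₂) =
      ((c : ℝ) - ∑ i, ∑ j, (T i j) ^ 2) / (c : ℝ) :=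
  Ts10_eq_general c hc T hrow
end

section
/- In the noisy-pair model with class transition matrix T (size c×c, c ≥ 2), the conditional probability that the noisy similarity label equals 1 given that the clean similarity label equals 0 satisfies T_{s,01} := P(H̄ = 1 | H = 0) = (Σ_j (Σ_i T_{ij})² − ‖T‖_Fro²) / (c² − c), where ‖T‖_Fro² = Σ_{i,j} T_{ij}² and Σ_i T_{ij} denotes the j-th column sum of T. -/
/-!
Both events only constrain the clean pair to be off-diagonal, so each probability is a sum over
`i₁ ≠ i₂`, i.e. a full double sum minus its diagonal. Summing out the noisy labels, the
denominator becomes `(c² - c)/c²` by row-stochasticity, and the numerator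
`(1/c²) ∑_{i₁ ≠ i₂} ∑_j T i₁ j T i₂ j`, whose full double sum is `∑_j (∑_i T i j)²` and whose
diagonal is `‖T‖_Fro²`. The common factor `1/c²` cancels in the ratio.
-/

open Finset

theorem sum_sum_ite_ne_eq_sub {ι M : Type*} [Fintype ι] [DecidableEq ι] [AddCommGroup M]
    (f : ι → ι → M) :
    ∑ i, ∑ j, (if i ≠ j then f i j else 0) = ∑ i, ∑ j, f i j - ∑ i, f i i := by
  rw [← sum_sub_distrib]
  refine sum_congr rfl fun i _ => ?_
  have hsplit : ∀ j, (if i ≠ j then f i j else 0) = f i j - if i = j then f i j else 0 := by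
    intro j
    by_cases h : i = j <;> simp [h]
  simp only [hsplit, sum_sub_distrib, sum_ite_eq, mem_univ, if_true]

section NoisyPair

variable {c : ℕ} {T : Matrix (Fin c) (Fin c) ℝ}

theorem noisyPairProb_clean (hrow : ∀ i, ∑ j, T i j = 1) (P : Fin c → Fin c → Prop)
    [DecidableRel P] :
    noisyPairProb c T (fun i₁ _ i₂ _ => P i₁ i₂) =
      ∑ i₁, ∑ i₂, if P i₁ i₂ then 1 / (c : ℝ) ^ 2 else 0 := by
  unfold noisyPairProb
  rw [sum_congr rfl fun i₁ _ => sum_comm]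
  refine sum_congr rfl fun i₁ _ => sum_congr rfl fun i₂ _ => ?_
  split_ifs with h
  · simp only [← mul_sum, hrow, mul_one]
  · simp

theorem noisyPairProb_and_noisy_eq (P : Fin c → Fin c → Prop) [DecidableRel P] :
    noisyPairProb c T (fun i₁ j₁ i₂ j₂ => P i₁ i₂ ∧ j₁ = j₂) =
      ∑ i₁, ∑ i₂, if P i₁ i₂ then 1 / (c : ℝ) ^ 2 * ∑ j, T i₁ j * T i₂ j else 0 := by
  unfold noisyPairProb
  rw [sum_congr rfl fun i₁ _ => sum_comm]
  refine sum_congr rfl fun i₁ _ => sum_congr rfl fun i₂ _ => ?_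
  split_ifs with h
  · simp [h, mul_sum, mul_assoc]
  · simp [h]

theorem noisyPairProb_clean_ne (hrow : ∀ i, ∑ j, T i j = 1) :
    noisyPairProb c T (fun i₁ _ i₂ _ => i₁ ≠ i₂) = ((c : ℝ) ^ 2 - c) / (c : ℝ) ^ 2 := by
  rw [noisyPairProb_clean hrow, sum_sum_ite_ne_eq_sub]
  simp only [sum_const, card_univ, Fintype.card_fin, nsmul_eq_mul]
  ring

theorem noisyPairProb_clean_ne_noisy_eq :
    noisyPairProb c T (fun i₁ j₁ i₂ j₂ => i₁ ≠ i₂ ∧ j₁ = j₂) =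
      ((∑ j, (∑ i, T i j) ^ 2) - ∑ i, ∑ j, (T i j) ^ 2) / (c : ℝ) ^ 2 := by
  rw [noisyPairProb_and_noisy_eq, sum_sum_ite_ne_eq_sub]
  have hcol : ∑ i₁, ∑ i₂, ∑ j, T i₁ j * T i₂ j = ∑ j, (∑ i, T i j) ^ 2 := by
    simp only [sq, sum_mul_sum]
    conv_rhs => rw [sum_comm]
    exact sum_congr rfl fun _ _ => sum_comm
  simp only [← mul_sum, hcol, ← sq]
  ring

end NoisyPair

theorem Ts01_eq_general (c : ℕ) (T : Matrix (Fin c) (Fin c) ℝ)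
    (hrow : ∀ i, ∑ j, T i j = 1) :
    noisyPairProb c T (fun i₁ j₁ i₂ j₂ => i₁ ≠ i₂ ∧ j₁ = j₂) /
        noisyPairProb c T (fun i₁ _ i₂ _ => i₁ ≠ i₂) =
      ((∑ j, (∑ i, T i j) ^ 2) - ∑ i, ∑ j, (T i j) ^ 2) / ((c : ℝ) ^ 2 - c) := by
  rw [noisyPairProb_clean_ne_noisy_eq, noisyPairProb_clean_ne hrow]
  rcases eq_or_ne (c : ℝ) 0 with hc | hc
  · simp [hc]
  · exact div_div_div_cancel_right₀ (pow_ne_zero 2 hc) _ _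

/-- In the noisy-pair model,
`T_{s,01} = P(H̄ = 1 | H = 0) = (Σ_j (Σ_i T_{ij})² − ‖T‖_Fro²) / (c² − c)`. -/
theorem Ts01_eq (c : ℕ) (hc : 2 ≤ c) (T : Matrix (Fin c) (Fin c) ℝ)
    (hpos : ∀ i j, 0 ≤ T i j) (hrow : ∀ i, ∑ j, T i j = 1) :
    noisyPairProb c T (fun i₁ j₁ i₂ j₂ => i₁ ≠ i₂ ∧ j₁ = j₂) /
        noisyPairProb c T (fun i₁ _ i₂ _ => i₁ ≠ i₂) =
      ((∑ j, (∑ i, T i j) ^ 2) - ∑ i, ∑ j, (T i j) ^ 2) / ((c : ℝ) ^ 2 - c) :=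
  Ts01_eq_general c T hrow
end

section
/- In the noisy-pair model with class transition matrix T (size c×c, c ≥ 2), the conditional probability that the noisy similarity label equals 0 given that the clean similarity label equals 0 satisfies T_{s,00} := P(H̄ = 0 | H = 0) = (c² − c − (Σ_j (Σ_i T_{ij})² − ‖T‖_Fro²)) / (c² − c), where ‖T‖_Fro² = Σ_{i,j} T_{ij}² and Σ_i T_{ij} denotes the j-th column sum of T. -/
private lemma den_eq (c : ℕ) (T : Matrix (Fin c) (Fin c) ℝ)
    (hrow : ∀ i, ∑ j, T i j = 1) :
    ∑ i₁ : Fin c, ∑ j₁ : Fin c, ∑ i₂ : Fin c, ∑ j₂ : Fin c,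
      (if i₁ ≠ i₂ then (1 / (c : ℝ) ^ 2) * T i₁ j₁ * T i₂ j₂ else 0)
      = (1 / (c:ℝ)^2) * ((c:ℝ)^2 - c) := by
  have h1 : ∀ (i₁ i₂ : Fin c) (a : ℝ),
      ∑ j₂, (if i₁ ≠ i₂ then a * T i₂ j₂ else 0) = if i₁ ≠ i₂ then a else 0 := by
    intro i₁ i₂ a
    by_cases h : i₁ = i₂ <;> simp [h, ← Finset.mul_sum, hrow]
  simp_rw [h1]
  have h2 : ∀ (i₁ : Fin c) (a : ℝ),
      ∑ i₂, (if i₁ ≠ i₂ then a else 0) = ((c:ℝ) - 1) * a := by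
    intro i₁ a
    have e : ∀ i₂ : Fin c, (if i₁ ≠ i₂ then a else 0) = a - (if i₁ = i₂ then a else 0) := by
      intro i₂; by_cases h : i₁ = i₂ <;> simp [h]
    rw [Finset.sum_congr rfl fun x _ => e x, Finset.sum_sub_distrib, Finset.sum_const,
      Finset.sum_ite_eq]
    simp [nsmul_eq_mul]
    ring
  simp_rw [h2]
  simp_rw [← mul_assoc]
  simp_rw [← Finset.mul_sum]
  simp only [hrow, mul_one, Finset.sum_const, Finset.card_univ, Fintype.card_fin, nsmul_eq_mul]
  ring

private lemma num_eq (c : ℕ) (T : Matrix (Fin c) (Fin c) ℝ)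
    (hrow : ∀ i, ∑ j, T i j = 1) :
    ∑ i₁ : Fin c, ∑ j₁ : Fin c, ∑ i₂ : Fin c, ∑ j₂ : Fin c,
      (if i₁ ≠ i₂ ∧ j₁ ≠ j₂ then (1 / (c : ℝ) ^ 2) * T i₁ j₁ * T i₂ j₂ else 0)
      = (1 / (c:ℝ)^2) *
        ((c:ℝ)^2 - c - ((∑ j, (∑ i, T i j) ^ 2) - ∑ i, ∑ j, (T i j) ^ 2)) := by
  have n1 : ∀ (i₁ j₁ i₂ : Fin c) (a : ℝ),
      ∑ j₂, (if i₁ ≠ i₂ ∧ j₁ ≠ j₂ then a * T i₂ j₂ else 0)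
        = if i₁ ≠ i₂ then a * (1 - T i₂ j₁) else 0 := by
    intro i₁ j₁ i₂ a
    by_cases h : i₁ = i₂
    · simp [h]
    · simp only [h, ne_eq, not_false_eq_true, true_and, if_true]
      have e : ∀ j₂ : Fin c, (if j₁ ≠ j₂ then a * T i₂ j₂ else 0)
          = a * T i₂ j₂ - (if j₁ = j₂ then a * T i₂ j₂ else 0) := by
        intro j₂; by_cases hj : j₁ = j₂ <;> simp [hj]
      rw [Finset.sum_congr rfl fun x _ => e x, Finset.sum_sub_distrib, ← Finset.mul_sum,
        hrow, Finset.sum_ite_eq]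
      simp
      ring
  simp_rw [n1]
  have n2 : ∀ (i₁ j₁ : Fin c) (a : ℝ),
      ∑ i₂, (if i₁ ≠ i₂ then a * (1 - T i₂ j₁) else 0)
        = a * ((c:ℝ) - ∑ i, T i j₁) - a * (1 - T i₁ j₁) := by
    intro i₁ j₁ a
    have e : ∀ i₂ : Fin c, (if i₁ ≠ i₂ then a * (1 - T i₂ j₁) else 0)
        = a * (1 - T i₂ j₁) - (if i₁ = i₂ then a * (1 - T i₂ j₁) else 0) := by
      intro i₂; by_cases h : i₁ = i₂ <;> simp [h]
    rw [Finset.sum_congr rfl fun x _ => e x, Finset.sum_sub_distrib, Finset.sum_ite_eq]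
    simp only [Finset.mem_univ, if_true]
    rw [← Finset.mul_sum]
    rw [Finset.sum_sub_distrib, Finset.sum_const, Finset.card_univ, Fintype.card_fin,
      nsmul_eq_mul, mul_one]
  simp_rw [n2]
  have key : ∀ i₁ : Fin c,
      ∑ j₁, ((1/(c:ℝ)^2 * T i₁ j₁) * ((c:ℝ) - ∑ i, T i j₁)
          - (1/(c:ℝ)^2 * T i₁ j₁) * (1 - T i₁ j₁))
        = 1/(c:ℝ)^2 * ((c:ℝ) - (∑ j, T i₁ j * ∑ i, T i j) - 1 + ∑ j, T i₁ j ^ 2) := by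
    intro i₁
    have e : ∀ j : Fin c,
        (1/(c:ℝ)^2 * T i₁ j) * ((c:ℝ) - ∑ i, T i j)
            - (1/(c:ℝ)^2 * T i₁ j) * (1 - T i₁ j)
          = 1/(c:ℝ)^2 * (T i₁ j * (c:ℝ) - T i₁ j * (∑ i, T i j) - T i₁ j + T i₁ j ^ 2) := by
      intro j; ring
    rw [Finset.sum_congr rfl fun x _ => e x, ← Finset.mul_sum]
    congr 1
    rw [Finset.sum_add_distrib, Finset.sum_sub_distrib, Finset.sum_sub_distrib,
      ← Finset.sum_mul, hrow, one_mul]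
  simp_rw [key, ← Finset.mul_sum]
  congr 1
  rw [Finset.sum_add_distrib, Finset.sum_sub_distrib, Finset.sum_sub_distrib,
    Finset.sum_const, Finset.sum_const, Finset.card_univ, Fintype.card_fin, nsmul_eq_mul,
    nsmul_eq_mul, mul_one]
  have hS : ∑ i₁ : Fin c, ∑ j, T i₁ j * (∑ i, T i j) = ∑ j, (∑ i, T i j)^2 := by
    rw [Finset.sum_comm]
    exact Finset.sum_congr rfl fun j _ => by rw [← Finset.sum_mul, sq]
  rw [hS]
  ring

/-- In the noisy-pair model,
`T_{s,00} = P(H̄ = 0 | H = 0) = (c² − c − (Σ_j (Σ_i T_{ij})² − ‖T‖_Fro²)) / (c² − c)`. -/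
theorem Ts00_eq (c : ℕ) (hc : 2 ≤ c) (T : Matrix (Fin c) (Fin c) ℝ)
    (hpos : ∀ i j, 0 ≤ T i j) (hrow : ∀ i, ∑ j, T i j = 1) :
    noisyPairProb c T (fun i₁ j₁ i₂ j₂ => i₁ ≠ i₂ ∧ j₁ ≠ j₂) /
        noisyPairProb c T (fun i₁ _ i₂ _ => i₁ ≠ i₂) =
      ((c : ℝ) ^ 2 - c - ((∑ j, (∑ i, T i j) ^ 2) - ∑ i, ∑ j, (T i j) ^ 2)) /
        ((c : ℝ) ^ 2 - c) := by
  have e1 : noisyPairProb c T (fun i₁ j₁ i₂ j₂ => i₁ ≠ i₂ ∧ j₁ ≠ j₂)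
      = (1 / (c:ℝ)^2) *
        ((c:ℝ)^2 - c - ((∑ j, (∑ i, T i j) ^ 2) - ∑ i, ∑ j, (T i j) ^ 2)) := by
    rw [noisyPairProb]
    convert num_eq c T hrow using 9
  have e2 : noisyPairProb c T (fun i₁ _ i₂ _ => i₁ ≠ i₂)
      = (1 / (c:ℝ)^2) * ((c:ℝ)^2 - c) := by
    rw [noisyPairProb]
    convert den_eq c T hrow using 9
  rw [e1, e2]
  have hc0 : (1 / (c:ℝ)^2) ≠ 0 := by
    have : (0:ℝ) < c := by exact_mod_cast Nat.lt_of_lt_of_le (by norm_num) hc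
    positivity
  rw [mul_div_mul_left _ _ hc0]
end

section
/- In the noisy-pair model with class transition matrix T (size c×c), suppose c ≥ 8, every diagonal entry satisfies T_{ii} > 1/2, and T is not the identity matrix (so the class noise rate ρ_c := 1 − (1/c)·Σ_i T_{ii} is strictly positive). Then the similarity noise rate is strictly lower than the class noise rate: P(H̄ ≠ H) < ρ_c. -/
/-!
Write `εᵢ = 1 - Tᵢᵢ` for the mass leaving class `i` and `S = Σᵢ εᵢ = c·ρ_c`. Given clean
labels `i, k`, the noisy labels agree with probability `(T Tᵀ)ᵢₖ`, so the similarity label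
flips with probability `1 - (T Tᵀ)ᵢᵢ ≤ 2εᵢ` when `i = k`, and `(T Tᵀ)ᵢₖ ≤ Tᵢₖ + Tₖᵢ + εᵢεₖ`
when `i ≠ k` (a common noisy label is `i`, `k`, or a third class reached from both). Summing,
`c²·ρ_s ≤ 4S + S²`, which is below `c·S = c²·ρ_c` as soon as `0 < S < c - 4`; the diagonal
condition gives `S < c/2 ≤ c - 4`.
-/

open Finset Matrix

namespace Matrix

variable {ι : Type*} [Fintype ι] {T : Matrix ι ι ℝ}

theorem one_sub_mul_transpose_diag_le (i : ι) : 1 - (T * Tᵀ) i i ≤ 2 * (1 - T i i) := by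
  have : T i i ^ 2 ≤ (T * Tᵀ) i i := by
    simpa [mul_apply, sq] using
      single_le_sum (f := fun j => T i j * T i j) (fun j _ => mul_self_nonneg _) (mem_univ i)
  nlinarith [sq_nonneg (1 - T i i)]

variable [DecidableEq ι]

theorem sum_erase_eq_one_sub_diag (hrow : ∀ i, ∑ j, T i j = 1) (i : ι) :
    ∑ j ∈ univ.erase i, T i j = 1 - T i i := by
  rw [← hrow i, ← add_sum_erase univ (T i) (mem_univ i), add_sub_cancel_left]

theorem diag_le_one (hpos : ∀ i j, 0 ≤ T i j) (hrow : ∀ i, ∑ j, T i j = 1) (i : ι) :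
    T i i ≤ 1 := by
  have := sum_erase_eq_one_sub_diag hrow i ▸ sum_nonneg fun j _ => hpos i j
  linarith

theorem le_one_sub_diag (hpos : ∀ i j, 0 ≤ T i j) (hrow : ∀ i, ∑ j, T i j = 1) {i j : ι}
    (hji : j ≠ i) : T i j ≤ 1 - T i i :=
  sum_erase_eq_one_sub_diag hrow i ▸
    single_le_sum (fun k _ => hpos i k) (mem_erase.mpr ⟨hji, mem_univ j⟩)

theorem eq_one_of_diag_eq_one (hpos : ∀ i j, 0 ≤ T i j) (hrow : ∀ i, ∑ j, T i j = 1)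
    (hdiag : ∀ i, T i i = 1) : T = 1 := by
  ext i j
  rcases eq_or_ne j i with rfl | hji
  · simp [hdiag]
  · have := le_one_sub_diag hpos hrow hji
    have := hpos i j
    simp only [one_apply_ne' hji]
    linarith [hdiag i]

theorem sum_one_sub_diag_pos (hpos : ∀ i j, 0 ≤ T i j) (hrow : ∀ i, ∑ j, T i j = 1)
    (hne : T ≠ 1) : 0 < ∑ i, (1 - T i i) := by
  obtain ⟨i, hi⟩ : ∃ i, T i i ≠ 1 := by
    by_contra! h
    exact hne (eq_one_of_diag_eq_one hpos hrow h)
  exact sum_pos' (fun j _ => sub_nonneg.mpr (diag_le_one hpos hrow j))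
    ⟨i, mem_univ i, sub_pos.mpr ((diag_le_one hpos hrow i).lt_of_ne hi)⟩

theorem mul_transpose_apply_le (hpos : ∀ i j, 0 ≤ T i j) (hrow : ∀ i, ∑ j, T i j = 1)
    {i k : ι} (hik : i ≠ k) :
    (T * Tᵀ) i k ≤ T i k + T k i + (1 - T i i) * (1 - T k k) := by
  have hk : k ∈ univ.erase i := mem_erase.mpr ⟨hik.symm, mem_univ k⟩
  rw [mul_apply, ← add_sum_erase _ _ (mem_univ i), ← add_sum_erase _ _ hk]
  simp only [transpose_apply]
  have hii : T i i * T k i ≤ T k i := mul_le_of_le_one_left (hpos k i) (diag_le_one hpos hrow i)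
  have hkk : T i k * T k k ≤ T i k := mul_le_of_le_one_right (hpos i k) (diag_le_one hpos hrow k)
  have hrest : ∑ j ∈ (univ.erase i).erase k, T i j * T k j ≤ (1 - T i i) * (1 - T k k) :=
    calc ∑ j ∈ (univ.erase i).erase k, T i j * T k j
        ≤ ∑ j ∈ (univ.erase i).erase k, T i j * (1 - T k k) :=
          sum_le_sum fun j hj => mul_le_mul_of_nonneg_left
            (le_one_sub_diag hpos hrow (mem_erase.mp hj).1) (hpos i j)
      _ ≤ ∑ j ∈ univ.erase i, T i j * (1 - T k k) :=
          sum_le_sum_of_subset_of_nonneg (erase_subset _ _) fun j _ _ =>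
            mul_nonneg (hpos i j) (sub_nonneg.mpr (diag_le_one hpos hrow k))
      _ = (1 - T i i) * (1 - T k k) := by rw [← sum_mul, sum_erase_eq_one_sub_diag hrow]
  linarith

variable (T) in
def outflow (i k : ι) : ℝ := if i = k then 1 - T i i else T i k

theorem sum_outflow (hrow : ∀ i, ∑ j, T i j = 1) (i : ι) :
    ∑ k, outflow T i k = 2 * (1 - T i i) := by
  have hoff : ∑ k ∈ univ.erase i, outflow T i k = 1 - T i i :=
    sum_erase_eq_one_sub_diag hrow i ▸ sum_congr rfl fun k hk => if_neg (mem_erase.mp hk).1.symm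
  rw [← add_sum_erase _ _ (mem_univ i), hoff, outflow, if_pos rfl]
  ring

def similarityFlipProb (T : Matrix ι ι ℝ) (i k : ι) : ℝ :=
  if i = k then 1 - (T * Tᵀ) i i else (T * Tᵀ) i k

theorem similarityFlipProb_le (hpos : ∀ i j, 0 ≤ T i j) (hrow : ∀ i, ∑ j, T i j = 1)
    (i k : ι) :
    similarityFlipProb T i k ≤ outflow T i k + outflow T k i + (1 - T i i) * (1 - T k k) := by
  rcases eq_or_ne i k with rfl | hik
  · simp only [similarityFlipProb, outflow, if_true]
    nlinarith [one_sub_mul_transpose_diag_le (T := T) i, sq_nonneg (1 - T i i)]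
  · simp only [similarityFlipProb, outflow, if_neg hik, if_neg hik.symm]
    exact mul_transpose_apply_le hpos hrow hik

theorem sum_similarityFlipProb_le (hpos : ∀ i j, 0 ≤ T i j) (hrow : ∀ i, ∑ j, T i j = 1) :
    ∑ i, ∑ k, similarityFlipProb T i k ≤ 4 * ∑ i, (1 - T i i) + (∑ i, (1 - T i i)) ^ 2 :=
  calc ∑ i, ∑ k, similarityFlipProb T i k
      ≤ ∑ i, ∑ k, (outflow T i k + outflow T k i + (1 - T i i) * (1 - T k k)) :=
        sum_le_sum fun i _ => sum_le_sum fun k _ => similarityFlipProb_le hpos hrow i k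
    _ = 4 * ∑ i, (1 - T i i) + (∑ i, (1 - T i i)) ^ 2 := by
        simp only [sum_add_distrib]
        rw [sum_comm (f := fun i k => outflow T k i), sq, sum_mul_sum]
        simp only [sum_outflow hrow, ← mul_sum]
        ring

end Matrix

theorem noisyPairProb_similarity_flip {c : ℕ} {T : Matrix (Fin c) (Fin c) ℝ}
    (hrow : ∀ i, ∑ j, T i j = 1) :
    noisyPairProb c T (fun i₁ j₁ i₂ j₂ => ¬ ((i₁ = i₂) ↔ (j₁ = j₂))) =
      1 / (c : ℝ) ^ 2 * ∑ i, ∑ k, similarityFlipProb T i k := by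
  have hpair : ∀ i k, ∑ j₁, ∑ j₂,
      (if ¬ ((i = k) ↔ (j₁ = j₂)) then T i j₁ * T k j₂ else 0) = similarityFlipProb T i k := by
    intro i k
    rcases eq_or_ne i k with rfl | hik
    · have hsplit : ∀ j₁ j₂, (if ¬ (True ↔ j₁ = j₂) then T i j₁ * T i j₂ else 0) =
          T i j₁ * T i j₂ - if j₁ = j₂ then T i j₁ * T i j₂ else 0 := by
        intro j₁ j₂; split_ifs <;> simp_all
      simp only [similarityFlipProb, if_true, hsplit, sum_sub_distrib, sum_ite_eq, mem_univ,
        ← sum_mul_sum, hrow, mul_apply, transpose_apply]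
      ring
    · simp [similarityFlipProb, hik, mul_apply, sum_ite_eq]
  simp only [noisyPairProb, mul_sum]
  refine sum_congr rfl fun i₁ _ => ?_
  rw [sum_comm]
  refine sum_congr rfl fun i₂ _ => ?_
  simp only [← hpair, mul_sum, mul_ite, mul_zero, mul_assoc]

/-- If `c ≥ 8`, every diagonal entry of `T` exceeds `1/2`, and `T` is not the identity
matrix (so the class noise rate `ρ_c = 1 − (1/c)·Σ_i T_{ii}` is positive), then the
similarity noise rate `P(H̄ ≠ H)` is strictly lower than the class noise rate. -/
theorem simiNoise_lt_classNoise (c : ℕ) (hc : 8 ≤ c) (T : Matrix (Fin c) (Fin c) ℝ)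
    (hpos : ∀ i j, 0 ≤ T i j) (hrow : ∀ i, ∑ j, T i j = 1)
    (hdiag : ∀ i, 1 / 2 < T i i) (hne : T ≠ 1) :
    noisyPairProb c T (fun i₁ j₁ i₂ j₂ => ¬ ((i₁ = i₂) ↔ (j₁ = j₂))) <
      1 - (1 / (c : ℝ)) * ∑ i, T i i := by
  have hc' : (8 : ℝ) ≤ c := by exact_mod_cast hc
  set S := ∑ i, (1 - T i i) with hS
  have hS_pos : 0 < S := sum_one_sub_diag_pos hpos hrow hne
  have hS_lt : S < c / 2 := by
    have : Nonempty (Fin c) := ⟨⟨0, by omega⟩⟩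
    calc S < ∑ _i : Fin c, (1 / 2 : ℝ) := sum_lt_sum_of_nonempty univ_nonempty fun i _ => by
            linarith [hdiag i]
      _ = c / 2 := by simp [div_eq_mul_inv]
  have hρ : 1 - (1 / (c : ℝ)) * ∑ i, T i i = S / c := by
    rw [hS, sum_sub_distrib]
    field_simp
    simp
  rw [noisyPairProb_similarity_flip hrow, hρ]
  calc 1 / (c : ℝ) ^ 2 * ∑ i, ∑ k, similarityFlipProb T i k
      ≤ 1 / (c : ℝ) ^ 2 * (4 * S + S ^ 2) := by
        gcongr; exact sum_similarityFlipProb_le hpos hrow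
    _ < 1 / (c : ℝ) ^ 2 * (c * S) := by
        gcongr; nlinarith
    _ = S / c := by field_simp
end

section
/- In the noisy-pair model with class transition matrix T (size c×c), suppose c ≥ 8 and the class noise rate ρ_c := 1 − (1/c)·Σ_i T_{ii} satisfies ρ_c ≤ 1/2. Then the similarity noise rate is at most the class noise rate: P(H̄ ≠ H) ≤ ρ_c. -/
/-! Writing `H` and `H̄` for the clean and noisy similarity events,
`P(H̄ ≠ H) = P(H) + P(H̄) - 2 P(H ∧ H̄) = (c + Σⱼ (Σᵢ Tᵢⱼ)² - 2 Σᵢⱼ Tᵢⱼ²) / c²`.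
Splitting each column sum into its diagonal entry `Tⱼⱼ ≤ 1` and the off-diagonal mass `rⱼ ≥ 0`,
with `Σⱼ rⱼ = c ρ_c`, bounds the squared column sums by `Σⱼ Tⱼⱼ² + 2cρ_c + (cρ_c)²`, and
Cauchy–Schwarz gives `Σⱼ Tⱼⱼ² ≥ c (1 - ρ_c)²`. What remains is
`cρ_c · (c² - 4c - cρ_c (c - 1)) ≥ 0`, which holds once `ρ_c ≤ 1/2` and `c ≥ 7`. -/

open Finset

namespace noisyPairProb

variable {c : ℕ} (T : Matrix (Fin c) (Fin c) ℝ)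

theorem not_iff (A B : Fin c → Fin c → Fin c → Fin c → Prop) :
    noisyPairProb c T (fun i₁ j₁ i₂ j₂ => ¬(A i₁ j₁ i₂ j₂ ↔ B i₁ j₁ i₂ j₂)) =
      noisyPairProb c T A + noisyPairProb c T B -
        2 * noisyPairProb c T (fun i₁ j₁ i₂ j₂ => A i₁ j₁ i₂ j₂ ∧ B i₁ j₁ i₂ j₂) := by
  simp only [noisyPairProb, mul_sum, ← sum_add_distrib, ← sum_sub_distrib]
  refine sum_congr rfl fun _ _ => sum_congr rfl fun _ _ => sum_congr rfl fun _ _ =>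
    sum_congr rfl fun _ _ => ?_
  split_ifs <;> simp_all; ring

theorem sameClean :
    noisyPairProb c T (fun i₁ _ i₂ _ => i₁ = i₂) = (1 / (c : ℝ) ^ 2) * ∑ i, (∑ j, T i j) ^ 2 := by
  simp only [noisyPairProb, sum_ite_irrel, sum_const_zero, sum_ite_eq, mem_univ, if_true, sq,
    mul_sum, sum_mul, mul_assoc]
  exact sum_congr rfl fun _ _ => sum_comm

theorem sameNoisy :
    noisyPairProb c T (fun _ j₁ _ j₂ => j₁ = j₂) = (1 / (c : ℝ) ^ 2) * ∑ j, (∑ i, T i j) ^ 2 := by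
  simp only [noisyPairProb, sum_ite_eq, mem_univ, if_true, sq, mul_sum, sum_mul, mul_assoc]
  rw [sum_comm]
  exact sum_congr rfl fun _ _ => sum_comm

theorem sameClean_and_sameNoisy :
    noisyPairProb c T (fun i₁ j₁ i₂ j₂ => i₁ = i₂ ∧ j₁ = j₂) =
      (1 / (c : ℝ) ^ 2) * ∑ i, ∑ j, T i j ^ 2 := by
  simp [noisyPairProb, sq, mul_sum, mul_assoc, ite_and]

end noisyPairProb

section RowStochastic

variable {ι : Type*} [Fintype ι] {T : Matrix ι ι ℝ}

theorem entry_le_one_of_rowStochastic (hpos : ∀ i j, 0 ≤ T i j) (hrow : ∀ i, ∑ j, T i j = 1)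
    (i j : ι) : T i j ≤ 1 :=
  hrow i ▸ single_le_sum (fun k _ => hpos i k) (mem_univ j)

theorem sum_sq_col_sum_le (hpos : ∀ i j, 0 ≤ T i j) (hrow : ∀ i, ∑ j, T i j = 1) :
    ∑ j, (∑ i, T i j) ^ 2 ≤
      ∑ j, T j j ^ 2 + 2 * (Fintype.card ι - ∑ j, T j j) + (Fintype.card ι - ∑ j, T j j) ^ 2 := by
  set r : ι → ℝ := fun j => ∑ i, T i j - T j j
  have hr : ∀ j, 0 ≤ r j := fun j => sub_nonneg.2 (single_le_sum (fun i _ => hpos i j) (mem_univ j))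
  have hsum_r : ∑ j, r j = Fintype.card ι - ∑ j, T j j := by
    simp only [r, sum_sub_distrib]
    rw [sum_comm]
    simp [hrow]
  calc ∑ j, (∑ i, T i j) ^ 2 = ∑ j, (T j j + r j) ^ 2 := by simp [r]
    _ ≤ ∑ j, (T j j ^ 2 + 2 * r j + r j ^ 2) := by
      gcongr with j
      nlinarith [hr j, hpos j j, entry_le_one_of_rowStochastic hpos hrow j j]
    _ = ∑ j, T j j ^ 2 + 2 * ∑ j, r j + ∑ j, r j ^ 2 := by
      rw [sum_add_distrib, sum_add_distrib, mul_sum]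
    _ ≤ ∑ j, T j j ^ 2 + 2 * ∑ j, r j + (∑ j, r j) ^ 2 := by
      gcongr
      exact sum_sq_le_sq_sum_of_nonneg fun j _ => hr j
    _ = _ := by rw [hsum_r]

end RowStochastic

theorem simiNoise_numerator_le {c a D Q C : ℝ} (hc : 7 ≤ c) (ha : c / 2 ≤ a) (hac : a ≤ c)
    (hDQ : D ≤ Q) (haD : a ^ 2 ≤ c * D) (hC : C ≤ D + 2 * (c - a) + (c - a) ^ 2) :
    c + C - 2 * Q ≤ c ^ 2 - c * a := by
  have key : 0 ≤ (c - a) * (c ^ 2 - 4 * c - (c - a) * (c - 1)) :=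
    mul_nonneg (by linarith) (by nlinarith)
  nlinarith

/-- If `c ≥ 8` and the class noise rate `ρ_c = 1 − (1/c)·Σ_i T_{ii}` is at most `1/2`,
then the similarity noise rate `P(H̄ ≠ H)` is at most the class noise rate. -/
theorem simiNoise_le_classNoise (c : ℕ) (hc : 8 ≤ c) (T : Matrix (Fin c) (Fin c) ℝ)
    (hpos : ∀ i j, 0 ≤ T i j) (hrow : ∀ i, ∑ j, T i j = 1)
    (hrate : 1 - (1 / (c : ℝ)) * (∑ i, T i i) ≤ 1 / 2) :
    noisyPairProb c T (fun i₁ j₁ i₂ j₂ => ¬ ((i₁ = i₂) ↔ (j₁ = j₂))) ≤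
      1 - (1 / (c : ℝ)) * ∑ i, T i i := by
  have hc7 : (7 : ℝ) ≤ c := by exact_mod_cast (by omega : 7 ≤ c)
  have hc0 : (0 : ℝ) < c := by linarith
  rw [noisyPairProb.not_iff, noisyPairProb.sameClean, noisyPairProb.sameNoisy,
    noisyPairProb.sameClean_and_sameNoisy]
  set a := ∑ i, T i i
  have ha_le : a ≤ c := by
    simpa using sum_le_sum (s := univ) fun i _ => entry_le_one_of_rowStochastic hpos hrow i i
  have half_le : c / 2 ≤ a := by
    rw [one_div_mul_eq_div, sub_le_iff_le_add, ← sub_le_iff_le_add', le_div_iff₀ hc0] at hrate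
    linarith
  have hdiag_sq : a ^ 2 ≤ c * ∑ i, T i i ^ 2 := by
    simpa using sq_sum_le_card_mul_sum_sq (s := univ) (f := fun i => T i i)
  have hdiag_le : ∑ i, T i i ^ 2 ≤ ∑ i, ∑ j, T i j ^ 2 :=
    sum_le_sum fun i _ => single_le_sum (f := fun j => T i j ^ 2) (fun _ _ => sq_nonneg _)
      (mem_univ i)
  have hnum := simiNoise_numerator_le hc7 half_le ha_le hdiag_le hdiag_sq
    (by simpa using sum_sq_col_sum_le hpos hrow)
  simp only [hrow, one_pow, sum_const, card_univ, Fintype.card_fin, nsmul_eq_mul, mul_one]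
  calc _ = 1 / (c : ℝ) ^ 2 * (c + ∑ j, (∑ i, T i j) ^ 2 - 2 * ∑ i, ∑ j, T i j ^ 2) := by ring
    _ ≤ 1 / (c : ℝ) ^ 2 * (c ^ 2 - c * a) := by gcongr
    _ = _ := by field_simp
end

section
/- In the noisy-pair model with class transition matrix T (size c×c, c ≥ 2), the similarity noise rate is bounded in terms of the class noise rate ρ_c := 1 − (1/c)·Σ_i T_{ii} by: P(H̄ ≠ H) ≤ (4/c)·ρ_c + ρ_c². -/
open Finset

private theorem simiNoise_le_bound_aux (c : ℕ) (hc : 2 ≤ c) (T : Matrix (Fin c) (Fin c) ℝ)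
    (hpos : ∀ i j, 0 ≤ T i j) (hrow : ∀ i, ∑ j, T i j = 1) :
    (∑ i₁ : Fin c, ∑ j₁ : Fin c, ∑ i₂ : Fin c, ∑ j₂ : Fin c,
      if ¬ ((i₁ = i₂) ↔ (j₁ = j₂)) then (1 / (c : ℝ) ^ 2) * T i₁ j₁ * T i₂ j₂ else 0) ≤
      (4 / (c : ℝ)) * (1 - (1 / (c : ℝ)) * ∑ i, T i i) +
        (1 - (1 / (c : ℝ)) * ∑ i, T i i) ^ 2 := by
  have hc0 : (0:ℝ) < (c:ℝ) := by
    have : 0 < c := lt_of_lt_of_le two_pos hc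
    exact_mod_cast this
  have hT1 : ∀ i, T i i ≤ 1 := fun i => by
    rw [← hrow i]
    exact Finset.single_le_sum (fun j _ => hpos i j) (mem_univ i)
  set S : ℝ := ∑ i, T i i with hS
  have hoff : ∀ i : Fin c, (∑ j, if j ≠ i then T i j else 0) = 1 - T i i := by
    intro i
    have h1 : (∑ j, if j ≠ i then T i j else 0)
        = (∑ j, T i j) - ∑ j, if j = i then T i j else 0 := by
      rw [← Finset.sum_sub_distrib]
      apply Finset.sum_congr rfl
      intro j _
      by_cases h : j = i <;> simp [h]
    rw [h1, hrow i, Finset.sum_ite_eq' univ i (T i)]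
    simp
  have hoffsum : (∑ i : Fin c, ∑ j, if j ≠ i then T i j else 0) = (c:ℝ) - S := by
    simp only [hoff]
    rw [Finset.sum_sub_distrib]
    simp [hS]
  -- W bound
  have hW : ∀ i₁ j₁ : Fin c,
      (∑ i₂ : Fin c, ∑ j₂ : Fin c,
        if j₂ = i₂ ∧ (i₂ = i₁ ∨ i₂ = j₁) then T i₂ j₂ else 0) ≤ 2 := by
    intro i₁ j₁
    have h1 : ∀ i₂ : Fin c, (∑ j₂ : Fin c,
        if j₂ = i₂ ∧ (i₂ = i₁ ∨ i₂ = j₁) then T i₂ j₂ else 0)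
        = if i₂ = i₁ ∨ i₂ = j₁ then T i₂ i₂ else 0 := by
      intro i₂
      by_cases hP : i₂ = i₁ ∨ i₂ = j₁
      · simp only [hP, and_true]
        rw [Finset.sum_ite_eq' univ i₂ (T i₂)]
        simp
      · simp [hP]
    simp only [h1]
    have h2 : ∀ i₂ : Fin c, (if i₂ = i₁ ∨ i₂ = j₁ then T i₂ i₂ else 0)
        ≤ (if i₂ = i₁ then (1:ℝ) else 0) + (if i₂ = j₁ then (1:ℝ) else 0) := by
      intro i₂
      by_cases ha : i₂ = i₁ <;> by_cases hb : i₂ = j₁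
      · simp only [← ha, ← hb]
        simp only [eq_self_iff_true, true_or, or_true, if_true]
        linarith [hT1 i₂]
      · simp only [← ha]
        simp only [eq_self_iff_true, true_or, if_true, if_neg hb]
        linarith [hT1 i₂]
      · simp only [← hb]
        simp only [eq_self_iff_true, or_true, if_true, if_neg ha]
        linarith [hT1 i₂]
      · simp [ha, hb]
    calc (∑ i₂ : Fin c, if i₂ = i₁ ∨ i₂ = j₁ then T i₂ i₂ else 0)
        ≤ ∑ i₂ : Fin c, ((if i₂ = i₁ then (1:ℝ) else 0) + (if i₂ = j₁ then (1:ℝ) else 0)) :=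
          Finset.sum_le_sum fun i₂ _ => h2 i₂
      _ = 2 := by
          rw [Finset.sum_add_distrib, Finset.sum_ite_eq' univ i₁ (fun _ => (1:ℝ)),
            Finset.sum_ite_eq' univ j₁ (fun _ => (1:ℝ))]
          simp; norm_num
  have hW' : ∀ i₂ j₂ : Fin c,
      (∑ i₁ : Fin c, ∑ j₁ : Fin c,
        if j₁ = i₁ ∧ (i₁ = i₂ ∨ i₁ = j₂) then T i₁ j₁ else 0) ≤ 2 := fun i₂ j₂ => hW i₂ j₂
  -- pointwise bound
  have key : ∀ i₁ j₁ i₂ j₂ : Fin c,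
      (if ¬ ((i₁ = i₂) ↔ (j₁ = j₂)) then (1 / (c : ℝ) ^ 2) * T i₁ j₁ * T i₂ j₂ else 0) ≤
      (1 / (c:ℝ)^2) *
        ((if j₁ ≠ i₁ then T i₁ j₁ else 0) *
            (if j₂ = i₂ ∧ (i₂ = i₁ ∨ i₂ = j₁) then T i₂ j₂ else 0)
        + (if j₁ = i₁ ∧ (i₁ = i₂ ∨ i₁ = j₂) then T i₁ j₁ else 0) *
            (if j₂ ≠ i₂ then T i₂ j₂ else 0)
        + (if j₁ ≠ i₁ then T i₁ j₁ else 0) * (if j₂ ≠ i₂ then T i₂ j₂ else 0)) := by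
    intro i₁ j₁ i₂ j₂
    have hc2 : (0:ℝ) < 1 / (c:ℝ)^2 := by positivity
    by_cases hA : ¬ ((i₁ = i₂) ↔ (j₁ = j₂))
    · rw [if_pos hA]
      by_cases h1 : j₁ = i₁ <;> by_cases h2 : j₂ = i₂
      · exfalso; apply hA; subst h1; subst h2; tauto
      · have hor : i₁ = i₂ ∨ i₁ = j₂ := by subst h1; tauto
        simp [h1, h2, hor, mul_assoc]
      · have hor : i₂ = i₁ ∨ i₂ = j₁ := by subst h2; tauto
        simp [h1, h2, hor, mul_assoc]
      · simp [h1, h2, mul_assoc]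
    · rw [if_neg hA]
      have hnn : ∀ (i j : Fin c) (P : Prop) (_ : Decidable P),
          (0:ℝ) ≤ if P then T i j else 0 := by
        intro i j P hP; split_ifs; exacts [hpos i j, le_rfl]
      apply mul_nonneg (by positivity)
      exact add_nonneg (add_nonneg (mul_nonneg (hnn _ _ _ _) (hnn _ _ _ _))
        (mul_nonneg (hnn _ _ _ _) (hnn _ _ _ _))) (mul_nonneg (hnn _ _ _ _) (hnn _ _ _ _))
  -- sum the bound
  have step1 : (∑ i₁ : Fin c, ∑ j₁ : Fin c, ∑ i₂ : Fin c, ∑ j₂ : Fin c,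
      if ¬ ((i₁ = i₂) ↔ (j₁ = j₂)) then (1 / (c : ℝ) ^ 2) * T i₁ j₁ * T i₂ j₂ else 0) ≤
      ∑ i₁ : Fin c, ∑ j₁ : Fin c, ∑ i₂ : Fin c, ∑ j₂ : Fin c, (1 / (c:ℝ)^2) *
        ((if j₁ ≠ i₁ then T i₁ j₁ else 0) *
            (if j₂ = i₂ ∧ (i₂ = i₁ ∨ i₂ = j₁) then T i₂ j₂ else 0)
        + (if j₁ = i₁ ∧ (i₁ = i₂ ∨ i₁ = j₂) then T i₁ j₁ else 0) *
            (if j₂ ≠ i₂ then T i₂ j₂ else 0)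
        + (if j₁ ≠ i₁ then T i₁ j₁ else 0) * (if j₂ ≠ i₂ then T i₂ j₂ else 0)) :=
    Finset.sum_le_sum fun i₁ _ => Finset.sum_le_sum fun j₁ _ =>
      Finset.sum_le_sum fun i₂ _ => Finset.sum_le_sum fun j₂ _ => key i₁ j₁ i₂ j₂
  refine le_trans step1 ?_
  have comm : ∀ F : Fin c → Fin c → Fin c → Fin c → ℝ,
      (∑ i₁ : Fin c, ∑ j₁ : Fin c, ∑ i₂ : Fin c, ∑ j₂ : Fin c, F i₁ j₁ i₂ j₂)
        = ∑ i₂ : Fin c, ∑ j₂ : Fin c, ∑ i₁ : Fin c, ∑ j₁ : Fin c, F i₁ j₁ i₂ j₂ := by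
    intro F
    trans (∑ i₁ : Fin c, ∑ i₂ : Fin c, ∑ j₁ : Fin c, ∑ j₂ : Fin c, F i₁ j₁ i₂ j₂)
    · exact Finset.sum_congr rfl fun i₁ _ => Finset.sum_comm
    trans (∑ i₂ : Fin c, ∑ i₁ : Fin c, ∑ j₁ : Fin c, ∑ j₂ : Fin c, F i₁ j₁ i₂ j₂)
    · exact Finset.sum_comm
    refine Finset.sum_congr rfl fun i₂ _ => ?_
    trans (∑ i₁ : Fin c, ∑ j₂ : Fin c, ∑ j₁ : Fin c, F i₁ j₁ i₂ j₂)
    · exact Finset.sum_congr rfl fun i₁ _ => Finset.sum_comm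
    exact Finset.sum_comm
  have pull : ∀ G : Fin c → Fin c → Fin c → Fin c → ℝ,
      (∑ i₁ : Fin c, ∑ j₁ : Fin c, ∑ i₂ : Fin c, ∑ j₂ : Fin c, (1/(c:ℝ)^2) * G i₁ j₁ i₂ j₂)
        = (1/(c:ℝ)^2) * ∑ i₁ : Fin c, ∑ j₁ : Fin c, ∑ i₂ : Fin c, ∑ j₂ : Fin c,
            G i₁ j₁ i₂ j₂ := by
    intro G; simp only [Finset.mul_sum]
  simp only [mul_add, Finset.sum_add_distrib]
  have fnn : ∀ i j : Fin c, (0:ℝ) ≤ if j ≠ i then T i j else 0 := by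
    intro i j; split_ifs; exacts [hpos i j, le_rfl]
  have h0 : (0:ℝ) ≤ 1 / (c:ℝ)^2 := by positivity
  have bA : (∑ i₁ : Fin c, ∑ j₁ : Fin c, ∑ i₂ : Fin c, ∑ j₂ : Fin c, (1 / (c:ℝ)^2) *
        ((if j₁ ≠ i₁ then T i₁ j₁ else 0) *
          (if j₂ = i₂ ∧ (i₂ = i₁ ∨ i₂ = j₁) then T i₂ j₂ else 0)))
      ≤ (1 / (c:ℝ)^2) * (2 * ((c:ℝ) - S)) := by
    rw [pull]
    apply mul_le_mul_of_nonneg_left _ h0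
    have factor : ∀ i₁ j₁ : Fin c,
        (∑ i₂ : Fin c, ∑ j₂ : Fin c, (if j₁ ≠ i₁ then T i₁ j₁ else 0) *
          (if j₂ = i₂ ∧ (i₂ = i₁ ∨ i₂ = j₁) then T i₂ j₂ else 0))
        = (if j₁ ≠ i₁ then T i₁ j₁ else 0) *
          (∑ i₂ : Fin c, ∑ j₂ : Fin c, if j₂ = i₂ ∧ (i₂ = i₁ ∨ i₂ = j₁) then T i₂ j₂ else 0) := by
      intro i₁ j₁; simp only [Finset.mul_sum]
    simp only [factor]
    calc (∑ i₁ : Fin c, ∑ j₁ : Fin c, (if j₁ ≠ i₁ then T i₁ j₁ else 0) *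
          (∑ i₂ : Fin c, ∑ j₂ : Fin c, if j₂ = i₂ ∧ (i₂ = i₁ ∨ i₂ = j₁) then T i₂ j₂ else 0))
        ≤ ∑ i₁ : Fin c, ∑ j₁ : Fin c, (if j₁ ≠ i₁ then T i₁ j₁ else 0) * 2 :=
          Finset.sum_le_sum fun i₁ _ => Finset.sum_le_sum fun j₁ _ =>
            mul_le_mul_of_nonneg_left (hW i₁ j₁) (fnn i₁ j₁)
      _ = 2 * ((c:ℝ) - S) := by
          simp only [← Finset.sum_mul]
          rw [hoffsum, mul_comm]
  have bB : (∑ i₁ : Fin c, ∑ j₁ : Fin c, ∑ i₂ : Fin c, ∑ j₂ : Fin c, (1 / (c:ℝ)^2) *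
        ((if j₁ = i₁ ∧ (i₁ = i₂ ∨ i₁ = j₂) then T i₁ j₁ else 0) *
          (if j₂ ≠ i₂ then T i₂ j₂ else 0)))
      ≤ (1 / (c:ℝ)^2) * (2 * ((c:ℝ) - S)) := by
    rw [comm (fun i₁ j₁ i₂ j₂ => (1 / (c:ℝ)^2) *
        ((if j₁ = i₁ ∧ (i₁ = i₂ ∨ i₁ = j₂) then T i₁ j₁ else 0) *
          (if j₂ ≠ i₂ then T i₂ j₂ else 0))), pull]
    apply mul_le_mul_of_nonneg_left _ h0
    have factor : ∀ i₂ j₂ : Fin c,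
        (∑ i₁ : Fin c, ∑ j₁ : Fin c, (if j₁ = i₁ ∧ (i₁ = i₂ ∨ i₁ = j₂) then T i₁ j₁ else 0) *
          (if j₂ ≠ i₂ then T i₂ j₂ else 0))
        = (∑ i₁ : Fin c, ∑ j₁ : Fin c, if j₁ = i₁ ∧ (i₁ = i₂ ∨ i₁ = j₂) then T i₁ j₁ else 0) *
          (if j₂ ≠ i₂ then T i₂ j₂ else 0) := by
      intro i₂ j₂; simp only [Finset.sum_mul]
    simp only [factor]
    calc (∑ i₂ : Fin c, ∑ j₂ : Fin c,
          (∑ i₁ : Fin c, ∑ j₁ : Fin c, if j₁ = i₁ ∧ (i₁ = i₂ ∨ i₁ = j₂) then T i₁ j₁ else 0) *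
            (if j₂ ≠ i₂ then T i₂ j₂ else 0))
        ≤ ∑ i₂ : Fin c, ∑ j₂ : Fin c, 2 * (if j₂ ≠ i₂ then T i₂ j₂ else 0) :=
          Finset.sum_le_sum fun i₂ _ => Finset.sum_le_sum fun j₂ _ =>
            mul_le_mul_of_nonneg_right (hW' i₂ j₂) (fnn i₂ j₂)
      _ = 2 * ((c:ℝ) - S) := by
          simp only [← Finset.mul_sum]
          rw [hoffsum]
  have bC : (∑ i₁ : Fin c, ∑ j₁ : Fin c, ∑ i₂ : Fin c, ∑ j₂ : Fin c, (1 / (c:ℝ)^2) *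
        ((if j₁ ≠ i₁ then T i₁ j₁ else 0) * (if j₂ ≠ i₂ then T i₂ j₂ else 0)))
      = (1 / (c:ℝ)^2) * (((c:ℝ) - S) * ((c:ℝ) - S)) := by
    rw [pull]
    congr 1
    have factor : ∀ i₁ j₁ : Fin c,
        (∑ i₂ : Fin c, ∑ j₂ : Fin c, (if j₁ ≠ i₁ then T i₁ j₁ else 0) *
          (if j₂ ≠ i₂ then T i₂ j₂ else 0))
        = (if j₁ ≠ i₁ then T i₁ j₁ else 0) * ((c:ℝ) - S) := by
      intro i₁ j₁
      simp only [← Finset.mul_sum]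
      rw [hoffsum]
    simp only [factor]
    simp only [← Finset.sum_mul]
    rw [hoffsum]
  have final : (1/(c:ℝ)^2)*(2*((c:ℝ)-S)) + (1/(c:ℝ)^2)*(2*((c:ℝ)-S))
      + (1/(c:ℝ)^2)*(((c:ℝ)-S)*((c:ℝ)-S))
      = 4/(c:ℝ)*(1 - 1/(c:ℝ)*S) + (1 - 1/(c:ℝ)*S)^2 := by
    field_simp
    ring
  linarith [bA, bB, bC]


/-- The similarity noise rate is bounded by `(4/c)·ρ_c + ρ_c²`, where
`ρ_c = 1 − (1/c)·Σ_i T_{ii}` is the class noise rate. -/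
theorem simiNoise_le_bound (c : ℕ) (hc : 2 ≤ c) (T : Matrix (Fin c) (Fin c) ℝ)
    (hpos : ∀ i j, 0 ≤ T i j) (hrow : ∀ i, ∑ j, T i j = 1) :
    noisyPairProb c T (fun i₁ j₁ i₂ j₂ => ¬ ((i₁ = i₂) ↔ (j₁ = j₂))) ≤
      (4 / (c : ℝ)) * (1 - (1 / (c : ℝ)) * ∑ i, T i i) +
        (1 - (1 / (c : ℝ)) * ∑ i, T i i) ^ 2 := by
  have h := simiNoise_le_bound_aux c hc T hpos hrow
  unfold noisyPairProb
  convert h using 5 with i₁ j₁ i₂ j₂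
  congr 1
end

section
/- In the noisy-pair model with class transition matrix T (size c×c, c ≥ 2), the probability that the noisy similarity label is wrong while exactly one of the two class labels is flipped is at most (4/c)·ρ_c, where ρ_c := 1 − (1/c)·Σ_i T_{ii}; that is, P(H̄ ≠ H and exactly one of {j₁ ≠ i₁, j₂ ≠ i₂} holds) ≤ (4/c)·ρ_c. -/
private lemma np_collapse {c : ℕ} (A : Prop) [Decidable A] (v : Fin c) (X : ℝ) :
    (∑ i₂ : Fin c, ∑ j₂ : Fin c, if (A ∧ j₂ = i₂ ∧ i₂ = v) then X else 0)
      = if A then X else 0 := by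
  by_cases hA : A
  · simp only [hA, true_and]
    have h1 : ∀ i₂ : Fin c, (∑ j₂ : Fin c, if (j₂ = i₂ ∧ i₂ = v) then X else 0)
        = if i₂ = v then X else 0 := by
      intro i₂; by_cases h : i₂ = v <;> simp [h]
    simp [h1]
  · simp [hA]

/-- generic bound: the event "j₁ flipped, j₂ = i₂, and i₂ is a prescribed function
of (i₁,j₁)" has probability at most `(1/c²)·∑ (1 - T i i)`. -/
private lemma np_aux {c : ℕ} (T U : Matrix (Fin c) (Fin c) ℝ)
    (hTpos : ∀ i j, 0 ≤ T i j) (hUpos : ∀ i j, 0 ≤ U i j)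
    (hTrow : ∀ i, ∑ j, T i j = 1) (hUrow : ∀ i, ∑ j, U i j = 1)
    (f : Fin c → Fin c → Fin c) :
    (∑ i₁ : Fin c, ∑ j₁ : Fin c, ∑ i₂ : Fin c, ∑ j₂ : Fin c,
      if (j₁ ≠ i₁ ∧ j₂ = i₂ ∧ i₂ = f i₁ j₁) then (1 / (c:ℝ)^2) * T i₁ j₁ * U i₂ j₂ else 0)
      ≤ (1 / (c:ℝ)^2) * ∑ i, (1 - T i i) := by
  classical
  have hUdiag : ∀ i, U i i ≤ 1 := by
    intro i
    rw [← hUrow i]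
    exact Finset.single_le_sum (fun j _ => hUpos i j) (Finset.mem_univ i)
  have hp : (0:ℝ) ≤ 1 / (c:ℝ)^2 := by positivity
  have step1 : ∀ i₁ j₁ : Fin c,
      (∑ i₂ : Fin c, ∑ j₂ : Fin c,
        if (j₁ ≠ i₁ ∧ j₂ = i₂ ∧ i₂ = f i₁ j₁) then (1 / (c:ℝ)^2) * T i₁ j₁ * U i₂ j₂ else 0)
      ≤ (if j₁ ≠ i₁ then (1 / (c:ℝ)^2) * T i₁ j₁ else 0) := by
    intro i₁ j₁
    have hb : ∀ i₂ j₂ : Fin c,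
        (if (j₁ ≠ i₁ ∧ j₂ = i₂ ∧ i₂ = f i₁ j₁) then (1 / (c:ℝ)^2) * T i₁ j₁ * U i₂ j₂ else 0)
        ≤ (if (j₁ ≠ i₁ ∧ j₂ = i₂ ∧ i₂ = f i₁ j₁) then (1 / (c:ℝ)^2) * T i₁ j₁ else 0) := by
      intro i₂ j₂
      by_cases h : j₁ ≠ i₁ ∧ j₂ = i₂ ∧ i₂ = f i₁ j₁
      · rw [if_pos h, if_pos h, h.2.1]
        calc (1 / (c:ℝ)^2) * T i₁ j₁ * U i₂ i₂ ≤ (1 / (c:ℝ)^2) * T i₁ j₁ * 1 := by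
              apply mul_le_mul_of_nonneg_left (hUdiag i₂) (mul_nonneg hp (hTpos i₁ j₁))
          _ = (1 / (c:ℝ)^2) * T i₁ j₁ := mul_one _
      · simp [h]
    calc (∑ i₂ : Fin c, ∑ j₂ : Fin c,
          if (j₁ ≠ i₁ ∧ j₂ = i₂ ∧ i₂ = f i₁ j₁) then (1 / (c:ℝ)^2) * T i₁ j₁ * U i₂ j₂ else 0)
        ≤ (∑ i₂ : Fin c, ∑ j₂ : Fin c,
          if (j₁ ≠ i₁ ∧ j₂ = i₂ ∧ i₂ = f i₁ j₁) then (1 / (c:ℝ)^2) * T i₁ j₁ else 0) := by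
          apply Finset.sum_le_sum; intro i₂ _
          apply Finset.sum_le_sum; intro j₂ _
          exact hb i₂ j₂
      _ = if j₁ ≠ i₁ then (1 / (c:ℝ)^2) * T i₁ j₁ else 0 :=
          np_collapse (j₁ ≠ i₁) (f i₁ j₁) _
  calc (∑ i₁ : Fin c, ∑ j₁ : Fin c, ∑ i₂ : Fin c, ∑ j₂ : Fin c,
        if (j₁ ≠ i₁ ∧ j₂ = i₂ ∧ i₂ = f i₁ j₁) then (1 / (c:ℝ)^2) * T i₁ j₁ * U i₂ j₂ else 0)
      ≤ ∑ i₁ : Fin c, ∑ j₁ : Fin c, (if j₁ ≠ i₁ then (1 / (c:ℝ)^2) * T i₁ j₁ else 0) := by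
        apply Finset.sum_le_sum; intro i₁ _
        apply Finset.sum_le_sum; intro j₁ _
        exact step1 i₁ j₁
    _ = (1 / (c:ℝ)^2) * ∑ i, (1 - T i i) := by
        have h2 : ∀ i₁ : Fin c,
            (∑ j₁ : Fin c, if j₁ ≠ i₁ then (1 / (c:ℝ)^2) * T i₁ j₁ else 0)
            = (1 / (c:ℝ)^2) * (1 - T i₁ i₁) := by
          intro i₁
          have : (∑ j₁ : Fin c, if j₁ ≠ i₁ then (1 / (c:ℝ)^2) * T i₁ j₁ else 0)
              = (∑ j₁ : Fin c, ((1 / (c:ℝ)^2) * T i₁ j₁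
                  - if j₁ = i₁ then (1 / (c:ℝ)^2) * T i₁ j₁ else 0)) := by
            apply Finset.sum_congr rfl; intro j₁ _
            by_cases h : j₁ = i₁ <;> simp [h]
          rw [this, Finset.sum_sub_distrib, Finset.sum_ite_eq' Finset.univ i₁,
            if_pos (Finset.mem_univ i₁), ← Finset.mul_sum, hTrow i₁]
          ring
        simp only [h2, ← Finset.mul_sum]


private lemma np_swap {c : ℕ} (F : Fin c → Fin c → Fin c → Fin c → ℝ) :
    (∑ i₁ : Fin c, ∑ j₁ : Fin c, ∑ i₂ : Fin c, ∑ j₂ : Fin c, F i₁ j₁ i₂ j₂)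
    = ∑ i₂ : Fin c, ∑ j₂ : Fin c, ∑ i₁ : Fin c, ∑ j₁ : Fin c, F i₁ j₁ i₂ j₂ := by
  have h1 : ∀ g : Fin c → Fin c → ℝ, ∑ a : Fin c, ∑ b : Fin c, g a b
      = ∑ b : Fin c, ∑ a : Fin c, g a b := fun g => Finset.sum_comm
  calc (∑ i₁ : Fin c, ∑ j₁ : Fin c, ∑ i₂ : Fin c, ∑ j₂ : Fin c, F i₁ j₁ i₂ j₂)
      = ∑ i₁ : Fin c, ∑ i₂ : Fin c, ∑ j₁ : Fin c, ∑ j₂ : Fin c, F i₁ j₁ i₂ j₂ :=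
        Finset.sum_congr rfl fun i₁ _ => h1 _
    _ = ∑ i₂ : Fin c, ∑ i₁ : Fin c, ∑ j₁ : Fin c, ∑ j₂ : Fin c, F i₁ j₁ i₂ j₂ := h1 _
    _ = ∑ i₂ : Fin c, ∑ i₁ : Fin c, ∑ j₂ : Fin c, ∑ j₁ : Fin c, F i₁ j₁ i₂ j₂ :=
        Finset.sum_congr rfl fun _ _ => Finset.sum_congr rfl fun _ _ => h1 _
    _ = ∑ i₂ : Fin c, ∑ j₂ : Fin c, ∑ i₁ : Fin c, ∑ j₁ : Fin c, F i₁ j₁ i₂ j₂ :=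
        Finset.sum_congr rfl fun i₂ _ => h1 _

private lemma np_aux₂ {c : ℕ} (T : Matrix (Fin c) (Fin c) ℝ)
    (hpos : ∀ i j, 0 ≤ T i j) (hrow : ∀ i, ∑ j, T i j = 1)
    (f : Fin c → Fin c → Fin c) :
    (∑ i₁ : Fin c, ∑ j₁ : Fin c, ∑ i₂ : Fin c, ∑ j₂ : Fin c,
      if (j₂ ≠ i₂ ∧ j₁ = i₁ ∧ i₁ = f i₂ j₂) then (1 / (c:ℝ)^2) * T i₁ j₁ * T i₂ j₂ else 0)
      ≤ (1 / (c:ℝ)^2) * ∑ i, (1 - T i i) := by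
  rw [np_swap]
  calc (∑ i₂ : Fin c, ∑ j₂ : Fin c, ∑ i₁ : Fin c, ∑ j₁ : Fin c,
        if (j₂ ≠ i₂ ∧ j₁ = i₁ ∧ i₁ = f i₂ j₂) then (1 / (c:ℝ)^2) * T i₁ j₁ * T i₂ j₂ else 0)
      = ∑ i₂ : Fin c, ∑ j₂ : Fin c, ∑ i₁ : Fin c, ∑ j₁ : Fin c,
        if (j₂ ≠ i₂ ∧ j₁ = i₁ ∧ i₁ = f i₂ j₂) then (1 / (c:ℝ)^2) * T i₂ j₂ * T i₁ j₁ else 0 := by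
        refine Finset.sum_congr rfl fun i₂ _ => Finset.sum_congr rfl fun j₂ _ =>
          Finset.sum_congr rfl fun i₁ _ => Finset.sum_congr rfl fun j₁ _ => ?_
        split <;> ring
    _ ≤ (1 / (c:ℝ)^2) * ∑ i, (1 - T i i) := np_aux T T hpos hpos hrow hrow f


/-- The probability that the noisy similarity label is wrong while exactly one of the two
class labels is flipped is at most `(4/c)·ρ_c`, where `ρ_c = 1 − (1/c)·Σ_i T_{ii}`. -/
theorem simiNoise_oneFlip_le (c : ℕ) (hc : 2 ≤ c) (T : Matrix (Fin c) (Fin c) ℝ)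
    (hpos : ∀ i j, 0 ≤ T i j) (hrow : ∀ i, ∑ j, T i j = 1) :
    noisyPairProb c T (fun i₁ j₁ i₂ j₂ =>
        ¬ ((i₁ = i₂) ↔ (j₁ = j₂)) ∧ ((j₁ ≠ i₁ ∧ j₂ = i₂) ∨ (j₁ = i₁ ∧ j₂ ≠ i₂))) ≤
      (4 / (c : ℝ)) * (1 - (1 / (c : ℝ)) * ∑ i, T i i) := by
  classical
  have hc0 : (0:ℝ) < (c:ℝ) := by exact_mod_cast Nat.lt_of_lt_of_le Nat.zero_lt_two hc
  unfold noisyPairProb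
  beta_reduce
  have key : ∀ (i₁ j₁ i₂ j₂ : Fin c)
      (inst : Decidable (¬ ((i₁ = i₂) ↔ (j₁ = j₂)) ∧ ((j₁ ≠ i₁ ∧ j₂ = i₂) ∨ (j₁ = i₁ ∧ j₂ ≠ i₂)))),
      (@ite ℝ (¬ ((i₁ = i₂) ↔ (j₁ = j₂)) ∧ ((j₁ ≠ i₁ ∧ j₂ = i₂) ∨ (j₁ = i₁ ∧ j₂ ≠ i₂))) inst
        ((1 / (c:ℝ)^2) * T i₁ j₁ * T i₂ j₂) 0)
      ≤ (if (j₁ ≠ i₁ ∧ j₂ = i₂ ∧ i₂ = i₁) then (1 / (c:ℝ)^2) * T i₁ j₁ * T i₂ j₂ else 0)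
        + (if (j₁ ≠ i₁ ∧ j₂ = i₂ ∧ i₂ = j₁) then (1 / (c:ℝ)^2) * T i₁ j₁ * T i₂ j₂ else 0)
        + (if (j₂ ≠ i₂ ∧ j₁ = i₁ ∧ i₁ = i₂) then (1 / (c:ℝ)^2) * T i₁ j₁ * T i₂ j₂ else 0)
        + (if (j₂ ≠ i₂ ∧ j₁ = i₁ ∧ i₁ = j₂) then (1 / (c:ℝ)^2) * T i₁ j₁ * T i₂ j₂ else 0) := by
    intro i₁ j₁ i₂ j₂ inst
    have ht : (0:ℝ) ≤ (1 / (c:ℝ)^2) * T i₁ j₁ * T i₂ j₂ :=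
      mul_nonneg (mul_nonneg (by positivity) (hpos i₁ j₁)) (hpos i₂ j₂)
    have hnn : ∀ (P : Prop) (instP : Decidable P),
        (0:ℝ) ≤ @ite ℝ P instP ((1 / (c:ℝ)^2) * T i₁ j₁ * T i₂ j₂) 0 := by
      intro P instP; split
      · exact ht
      · exact le_rfl
    have b1 := hnn (j₁ ≠ i₁ ∧ j₂ = i₂ ∧ i₂ = i₁) inferInstance
    have b2 := hnn (j₁ ≠ i₁ ∧ j₂ = i₂ ∧ i₂ = j₁) inferInstance
    have b3 := hnn (j₂ ≠ i₂ ∧ j₁ = i₁ ∧ i₁ = i₂) inferInstance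
    have b4 := hnn (j₂ ≠ i₂ ∧ j₁ = i₁ ∧ i₁ = j₂) inferInstance
    by_cases hE : (¬ ((i₁ = i₂) ↔ (j₁ = j₂)) ∧ ((j₁ ≠ i₁ ∧ j₂ = i₂) ∨ (j₁ = i₁ ∧ j₂ ≠ i₂)))
    · obtain ⟨hm, hcases⟩ := hE
      have hdisj : (j₁ ≠ i₁ ∧ j₂ = i₂ ∧ i₂ = i₁) ∨ (j₁ ≠ i₁ ∧ j₂ = i₂ ∧ i₂ = j₁)
          ∨ (j₂ ≠ i₂ ∧ j₁ = i₁ ∧ i₁ = i₂) ∨ (j₂ ≠ i₂ ∧ j₁ = i₁ ∧ i₁ = j₂) := by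
        rcases hcases with ⟨h1, h2⟩ | ⟨h1, h2⟩
        · by_cases hi : i₁ = i₂
          · exact Or.inl ⟨h1, h2, hi.symm⟩
          · have hj : j₁ = j₂ := by tauto
            exact Or.inr (Or.inl ⟨h1, h2, by rw [← h2, hj]⟩)
        · by_cases hi : i₁ = i₂
          · exact Or.inr (Or.inr (Or.inl ⟨h2, h1, hi⟩))
          · have hj : j₁ = j₂ := by tauto
            exact Or.inr (Or.inr (Or.inr ⟨h2, h1, by rw [← h1]; exact hj⟩))
      rw [if_pos ⟨hm, hcases⟩]
      rcases hdisj with h | h | h | h <;> rw [if_pos h] <;> linarith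
    · rw [if_neg hE]
      linarith
  refine le_trans (Finset.sum_le_sum fun i₁ _ => Finset.sum_le_sum fun j₁ _ =>
    Finset.sum_le_sum fun i₂ _ => Finset.sum_le_sum fun j₂ _ => key i₁ j₁ i₂ j₂ _) ?_
  calc (∑ i₁ : Fin c, ∑ j₁ : Fin c, ∑ i₂ : Fin c, ∑ j₂ : Fin c,
        ((if (j₁ ≠ i₁ ∧ j₂ = i₂ ∧ i₂ = i₁) then (1 / (c:ℝ)^2) * T i₁ j₁ * T i₂ j₂ else 0)
        + (if (j₁ ≠ i₁ ∧ j₂ = i₂ ∧ i₂ = j₁) then (1 / (c:ℝ)^2) * T i₁ j₁ * T i₂ j₂ else 0)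
        + (if (j₂ ≠ i₂ ∧ j₁ = i₁ ∧ i₁ = i₂) then (1 / (c:ℝ)^2) * T i₁ j₁ * T i₂ j₂ else 0)
        + (if (j₂ ≠ i₂ ∧ j₁ = i₁ ∧ i₁ = j₂) then (1 / (c:ℝ)^2) * T i₁ j₁ * T i₂ j₂ else 0)))
      = (∑ i₁ : Fin c, ∑ j₁ : Fin c, ∑ i₂ : Fin c, ∑ j₂ : Fin c,
          if (j₁ ≠ i₁ ∧ j₂ = i₂ ∧ i₂ = i₁) then (1 / (c:ℝ)^2) * T i₁ j₁ * T i₂ j₂ else 0)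
        + (∑ i₁ : Fin c, ∑ j₁ : Fin c, ∑ i₂ : Fin c, ∑ j₂ : Fin c,
          if (j₁ ≠ i₁ ∧ j₂ = i₂ ∧ i₂ = j₁) then (1 / (c:ℝ)^2) * T i₁ j₁ * T i₂ j₂ else 0)
        + (∑ i₁ : Fin c, ∑ j₁ : Fin c, ∑ i₂ : Fin c, ∑ j₂ : Fin c,
          if (j₂ ≠ i₂ ∧ j₁ = i₁ ∧ i₁ = i₂) then (1 / (c:ℝ)^2) * T i₁ j₁ * T i₂ j₂ else 0)
        + (∑ i₁ : Fin c, ∑ j₁ : Fin c, ∑ i₂ : Fin c, ∑ j₂ : Fin c,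
          if (j₂ ≠ i₂ ∧ j₁ = i₁ ∧ i₁ = j₂) then (1 / (c:ℝ)^2) * T i₁ j₁ * T i₂ j₂ else 0) := by
        simp only [Finset.sum_add_distrib]
    _ ≤ (1 / (c:ℝ)^2) * (∑ i, (1 - T i i)) + (1 / (c:ℝ)^2) * (∑ i, (1 - T i i))
        + (1 / (c:ℝ)^2) * (∑ i, (1 - T i i)) + (1 / (c:ℝ)^2) * (∑ i, (1 - T i i)) := by
        refine add_le_add (add_le_add (add_le_add ?_ ?_) ?_) ?_
        · exact np_aux T T hpos hpos hrow hrow (fun i _ => i)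
        · exact np_aux T T hpos hpos hrow hrow (fun _ j => j)
        · exact np_aux₂ T hpos hrow (fun i _ => i)
        · exact np_aux₂ T hpos hrow (fun _ j => j)
    _ = (4 / (c : ℝ)) * (1 - (1 / (c : ℝ)) * ∑ i, T i i) := by
        have hS : (∑ i : Fin c, (1 - T i i)) = (c:ℝ) - ∑ i, T i i := by
          rw [Finset.sum_sub_distrib]; simp
        rw [hS]
        field_simp
        ring
end

section
/- Let c ≥ 2 and let T be a c×c real matrix with nonnegative entries whose rows each sum to 1. If T is invertible, then the similarity transition matrix entries T_{s,00} := (c² − c − (Σ_j (Σ_i T_{ij})² − ‖T‖_Fro²)) / (c² − c) and T_{s,11} := ‖T‖_Fro² / c satisfy T_{s,00} + T_{s,11} > 1, where ‖T‖_Fro² = Σ_{i,j} T_{ij}². -/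
/-- If the class transition matrix `T` (nonnegative entries, rows summing to 1) is
invertible, then the derived similarity transition matrix entries satisfy
`T_{s,00} + T_{s,11} > 1`. -/
theorem Ts00_add_Ts11_gt_one (c : ℕ) (hc : 2 ≤ c) (T : Matrix (Fin c) (Fin c) ℝ)
    (hpos : ∀ i j, 0 ≤ T i j) (hrow : ∀ i, ∑ j, T i j = 1) (hinv : IsUnit T) :
    ((c : ℝ) ^ 2 - c - ((∑ j, (∑ i, T i j) ^ 2) - ∑ i, ∑ j, (T i j) ^ 2)) /
        ((c : ℝ) ^ 2 - c) +
      (∑ i, ∑ j, (T i j) ^ 2) / (c : ℝ) > 1 := by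
  have hcR : (2:ℝ) ≤ (c:ℝ) := by exact_mod_cast hc
  have hc0 : (0:ℝ) < c := by linarith
  have hc1 : (0:ℝ) < (c:ℝ)^2 - c := by nlinarith
  set S : ℝ := ∑ i, ∑ j, (T i j)^2 with hS
  set Q : ℝ := ∑ j, (∑ i, T i j)^2 with hQ
  -- per-column identity
  have colid : ∀ j, ∑ i, ∑ k, (T i j - T k j)^2
      = 2 * ((c:ℝ) * ∑ i, (T i j)^2 - (∑ i, T i j)^2) := by
    intro j
    have h : ∀ i k : Fin c, (T i j - T k j)^2
        = (T i j)^2 - 2*(T i j * T k j) + (T k j)^2 := by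
      intro i k; ring
    simp only [h, Finset.sum_add_distrib, Finset.sum_sub_distrib,
      Finset.sum_const, Finset.card_fin, ← Finset.mul_sum, ← Finset.sum_mul,
      nsmul_eq_mul]
    ring
  set D : ℝ := ∑ j, ∑ i, ∑ k, (T i j - T k j)^2 with hD
  have hDeq : D = 2 * ((c:ℝ) * S - Q) := by
    have h1 : D = ∑ j, 2 * ((c:ℝ) * ∑ i, (T i j)^2 - (∑ i, T i j)^2) :=
      Finset.sum_congr rfl (fun j _ => colid j)
    rw [h1, ← Finset.mul_sum, Finset.sum_sub_distrib, ← Finset.mul_sum, ← hQ,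
      hS, Finset.sum_comm]
  have hDnonneg : 0 ≤ D :=
    Finset.sum_nonneg fun j _ => Finset.sum_nonneg fun i _ =>
      Finset.sum_nonneg fun k _ => sq_nonneg _
  have hDne : D ≠ 0 := by
    intro h0
    rw [hD, Finset.sum_eq_zero_iff_of_nonneg (fun j _ =>
      Finset.sum_nonneg fun i _ => Finset.sum_nonneg fun k _ => sq_nonneg _)] at h0
    have hallik : ∀ i k j : Fin c, T i j = T k j := by
      intro i k j
      have h1 := h0 j (Finset.mem_univ j)
      rw [Finset.sum_eq_zero_iff_of_nonneg (fun i _ =>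
        Finset.sum_nonneg fun k _ => sq_nonneg _)] at h1
      have h2 := h1 i (Finset.mem_univ i)
      rw [Finset.sum_eq_zero_iff_of_nonneg (fun k _ => sq_nonneg _)] at h2
      have h3 := h2 k (Finset.mem_univ k)
      have := sq_eq_zero_iff.mp h3
      linarith
    -- rows 0 and 1 are equal, so det = 0, contradicting invertibility
    have h01 : (⟨0, by omega⟩ : Fin c) ≠ (⟨1, by omega⟩ : Fin c) := by
      intro h; simpa using congrArg Fin.val h
    have hroweq : T ⟨0, by omega⟩ = T ⟨1, by omega⟩ :=
      funext fun j => hallik _ _ j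
    have hdet : T.det = 0 := Matrix.det_zero_of_row_eq h01 hroweq
    have hud := (Matrix.isUnit_iff_isUnit_det T).mp hinv
    rw [hdet] at hud
    exact (by simpa using hud : False)
  have hDpos : 0 < D := lt_of_le_of_ne hDnonneg (Ne.symm hDne)
  have key : Q < (c:ℝ) * S := by nlinarith [hDeq ▸ hDpos]
  have heq : ((c:ℝ)^2 - c - (Q - S)) / ((c:ℝ)^2 - c) + S / c
      = 1 + ((c:ℝ) * S - Q) / ((c:ℝ)^2 - c) := by
    rw [div_add_div _ _ (ne_of_gt hc1) (ne_of_gt hc0),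
      add_div' _ _ _ (ne_of_gt hc1),
      div_eq_div_iff (by positivity) (ne_of_gt hc1)]
    ring
  rw [gt_iff_lt, heq]
  have hfr : 0 < ((c:ℝ) * S - Q) / ((c:ℝ)^2 - c) := div_pos (by linarith) hc1
  linarith
end

section
/- In the unbalanced noisy-pair model with class transition matrix T and class-prior vector π (size c, c ≥ 2), the conditional probability that the noisy similarity label equals 1 given that the clean similarity label equals 1 satisfies T_{s,11} := P(H̄ = 1 | H = 1) = (Σ_i π_i² Σ_j T_{ij}²) / (Σ_i π_i²). -/
/- The probability of an event `A` (on quadruples `(i₁, j₁, i₂, j₂)` of clean/noisy class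
labels for two independent points) in the unbalanced noisy-pair model with class transition
matrix `T` and class priors `w`: each quadruple has probability
`w i₁ · w i₂ · T i₁ j₁ · T i₂ j₂`. -/
open Classical in
noncomputable def unbalancedPairProb (c : ℕ) (T : Matrix (Fin c) (Fin c) ℝ)
    (w : Fin c → ℝ) (A : Fin c → Fin c → Fin c → Fin c → Prop) : ℝ :=
  ∑ i₁ : Fin c, ∑ j₁ : Fin c, ∑ i₂ : Fin c, ∑ j₂ : Fin c,
    if A i₁ j₁ i₂ j₂ then w i₁ * w i₂ * T i₁ j₁ * T i₂ j₂ else 0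

/-- In the unbalanced noisy-pair model with priors `w`,
`T_{s,11} = P(H̄ = 1 | H = 1) = (Σ_i w_i² Σ_j T_{ij}²) / (Σ_i w_i²)`. -/
theorem unbalanced_Ts11_eq (c : ℕ) (hc : 2 ≤ c) (T : Matrix (Fin c) (Fin c) ℝ)
    (w : Fin c → ℝ) (hpos : ∀ i j, 0 ≤ T i j) (hrow : ∀ i, ∑ j, T i j = 1)
    (hw : ∀ i, 0 < w i) (hw1 : ∑ i, w i = 1) :
    unbalancedPairProb c T w (fun i₁ j₁ i₂ j₂ => i₁ = i₂ ∧ j₁ = j₂) /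
        unbalancedPairProb c T w (fun i₁ _ i₂ _ => i₁ = i₂) =
      (∑ i, (w i) ^ 2 * ∑ j, (T i j) ^ 2) / (∑ i, (w i) ^ 2) := by
  have hnum : unbalancedPairProb c T w (fun i₁ j₁ i₂ j₂ => i₁ = i₂ ∧ j₁ = j₂)
      = ∑ i, (w i) ^ 2 * ∑ j, (T i j) ^ 2 := by
    unfold unbalancedPairProb
    beta_reduce
    have e1 : ∀ i₁ j₁ i₂ j₂ : Fin c,
        (@ite ℝ (i₁ = i₂ ∧ j₁ = j₂) (Classical.propDecidable _)
          (w i₁ * w i₂ * T i₁ j₁ * T i₂ j₂) 0)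
        = if i₁ = i₂ ∧ j₁ = j₂ then w i₁ * w i₂ * T i₁ j₁ * T i₂ j₂ else 0 := by
      intro i₁ j₁ i₂ j₂
      by_cases h : i₁ = i₂ ∧ j₁ = j₂
      · rw [if_pos h, if_pos h]
      · rw [if_neg h, if_neg h]
    simp only [e1, ite_and]
    refine Eq.trans (Finset.sum_congr rfl fun i₁ _ => Finset.sum_congr rfl fun j₁ _ =>
      Finset.sum_comm) ?_
    simp only [Finset.sum_ite_eq, Finset.mem_univ, if_true]
    refine Finset.sum_congr rfl fun i _ => ?_
    rw [Finset.mul_sum]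
    exact Finset.sum_congr rfl fun j _ => by ring
  have hden : unbalancedPairProb c T w (fun i₁ _ i₂ _ => i₁ = i₂) = ∑ i, (w i) ^ 2 := by
    unfold unbalancedPairProb
    beta_reduce
    have e2 : ∀ i₁ j₁ i₂ j₂ : Fin c,
        (@ite ℝ (i₁ = i₂) (Classical.propDecidable _)
          (w i₁ * w i₂ * T i₁ j₁ * T i₂ j₂) 0)
        = if i₁ = i₂ then w i₁ * w i₂ * T i₁ j₁ * T i₂ j₂ else 0 := by
      intro i₁ j₁ i₂ j₂
      by_cases h : i₁ = i₂
      · rw [if_pos h, if_pos h]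
      · rw [if_neg h, if_neg h]
    simp only [e2]
    refine Eq.trans (Finset.sum_congr rfl fun i₁ _ => Finset.sum_congr rfl fun j₁ _ =>
      Finset.sum_comm) ?_
    simp only [Finset.sum_ite_eq, Finset.mem_univ, if_true]
    refine Finset.sum_congr rfl fun i _ => ?_
    have h1 : ∀ j₁ : Fin c, (∑ j₂ : Fin c, w i * w i * T i j₁ * T i j₂)
        = (w i) ^ 2 * T i j₁ := by
      intro j₁
      rw [← Finset.mul_sum, hrow]
      ring
    simp only [h1]
    rw [← Finset.mul_sum, hrow, mul_one]
  rw [hnum, hden]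
end

section
/- In the noisy-pair model with class transition matrix T (size c×c, c ≥ 2), the similarity noise rate has the closed form P(H̄ ≠ H) = 1/c + (Σ_j (Σ_i T_{ij})² − 2·‖T‖_Fro²) / c², where ‖T‖_Fro² = Σ_{i,j} T_{ij}² and Σ_i T_{ij} denotes the j-th column sum of T. -/
open Finset

namespace Matrix

variable {ι κ R : Type*} [Fintype ι] [Fintype κ]

open Classical in
noncomputable def pairWeight [CommSemiring R] (T : Matrix ι κ R) (A : ι → κ → ι → κ → Prop) :
    R :=
  ∑ i₁, ∑ j₁, ∑ i₂, ∑ j₂, if A i₁ j₁ i₂ j₂ then T i₁ j₁ * T i₂ j₂ else 0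

theorem pairWeight_not_iff [CommRing R] (T : Matrix ι κ R) (P Q : ι → κ → ι → κ → Prop) :
    T.pairWeight (fun i₁ j₁ i₂ j₂ => ¬(P i₁ j₁ i₂ j₂ ↔ Q i₁ j₁ i₂ j₂)) =
      T.pairWeight P + T.pairWeight Q -
        2 * T.pairWeight (fun i₁ j₁ i₂ j₂ => P i₁ j₁ i₂ j₂ ∧ Q i₁ j₁ i₂ j₂) := by
  simp only [pairWeight, mul_sum, ← sum_add_distrib, ← sum_sub_distrib]
  refine sum_congr rfl fun i₁ _ => sum_congr rfl fun j₁ _ =>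
    sum_congr rfl fun i₂ _ => sum_congr rfl fun j₂ _ => ?_
  by_cases hP : P i₁ j₁ i₂ j₂ <;> by_cases hQ : Q i₁ j₁ i₂ j₂ <;> simp [hP, hQ, two_mul]

variable [CommSemiring R]

theorem pairWeight_row_eq (T : Matrix ι κ R) :
    T.pairWeight (fun i₁ _ i₂ _ => i₁ = i₂) = ∑ i, (∑ j, T i j) ^ 2 := by
  classical
  simp only [pairWeight]
  rw [sum_congr rfl fun i₁ _ => sum_congr rfl fun j₁ _ => sum_comm]
  simp [sq, sum_mul_sum]

theorem pairWeight_col_eq (T : Matrix ι κ R) :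
    T.pairWeight (fun _ j₁ _ j₂ => j₁ = j₂) = ∑ j, (∑ i, T i j) ^ 2 := by
  classical
  simp only [pairWeight, sum_ite_eq, mem_univ, if_true, ← mul_sum, sq, sum_mul]
  exact sum_comm

theorem pairWeight_entry_eq (T : Matrix ι κ R) :
    T.pairWeight (fun i₁ j₁ i₂ j₂ => i₁ = i₂ ∧ j₁ = j₂) = ∑ i, ∑ j, T i j ^ 2 := by
  refine sum_congr rfl fun i _ => sum_congr rfl fun j _ => ?_
  rw [Fintype.sum_eq_single i fun i' hi' => by simp [Ne.symm hi'],
    Fintype.sum_eq_single j fun j' hj' => by simp [Ne.symm hj'], if_pos ⟨rfl, rfl⟩, sq]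

end Matrix

theorem noisyPairProb_eq_pairWeight_div (c : ℕ) (T : Matrix (Fin c) (Fin c) ℝ)
    (A : Fin c → Fin c → Fin c → Fin c → Prop) :
    noisyPairProb c T A = T.pairWeight A / (c : ℝ) ^ 2 := by
  simp only [noisyPairProb, Matrix.pairWeight, sum_div, ite_div, zero_div, one_div_mul_eq_div,
    mul_div_right_comm]

theorem simiNoise_closed_form_general (c : ℕ) (T : Matrix (Fin c) (Fin c) ℝ)
    (hrow : ∀ i, ∑ j, T i j = 1) :
    noisyPairProb c T (fun i₁ j₁ i₂ j₂ => ¬ ((i₁ = i₂) ↔ (j₁ = j₂))) =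
      1 / (c : ℝ) +
        ((∑ j, (∑ i, T i j) ^ 2) - 2 * ∑ i, ∑ j, (T i j) ^ 2) / (c : ℝ) ^ 2 := by
  have hrows : ∑ i, (∑ j, T i j) ^ 2 = c := by simp [hrow]
  rw [noisyPairProb_eq_pairWeight_div, Matrix.pairWeight_not_iff, Matrix.pairWeight_row_eq,
    hrows, Matrix.pairWeight_col_eq, Matrix.pairWeight_entry_eq]
  rcases eq_or_ne (c : ℝ) 0 with hc | hc
  · simp [hc]
  · field_simp
    ring

/-- Closed form for the similarity noise rate:
`P(H̄ ≠ H) = 1/c + (Σ_j (Σ_i T_{ij})² − 2‖T‖_Fro²) / c²`. -/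
theorem simiNoise_closed_form (c : ℕ) (hc : 2 ≤ c) (T : Matrix (Fin c) (Fin c) ℝ)
    (hpos : ∀ i j, 0 ≤ T i j) (hrow : ∀ i, ∑ j, T i j = 1) :
    noisyPairProb c T (fun i₁ j₁ i₂ j₂ => ¬ ((i₁ = i₂) ↔ (j₁ = j₂))) =
      1 / (c : ℝ) +
        ((∑ j, (∑ i, T i j) ^ 2) - 2 * ∑ i, ∑ j, (T i j) ^ 2) / (c : ℝ) ^ 2 :=
  simiNoise_closed_form_general c T hrow
end

section
/- Let c ≥ 2 and let T be the symmetric-noise class transition matrix with noise rate ρ ∈ [0, 1], i.e., T_{ii} = 1 − ρ for all i and T_{ij} = ρ/(c − 1) for i ≠ j. Then in the noisy-pair model the similarity noise rate satisfies P(H̄ ≠ H) = (2/c)·(2ρ − cρ²/(c − 1)) = 4ρ/c − 2ρ²/(c − 1). -/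
/-- For symmetric noise with rate `ρ`, the similarity noise rate is
`P(H̄ ≠ H) = (2/c)·(2ρ − cρ²/(c − 1)) = 4ρ/c − 2ρ²/(c − 1)`. -/
theorem symmetric_simiNoise_eq (c : ℕ) (hc : 2 ≤ c) (ρ : ℝ) (hρ : 0 ≤ ρ) (hρ1 : ρ ≤ 1)
    (T : Matrix (Fin c) (Fin c) ℝ)
    (hT : ∀ i j, T i j = if i = j then 1 - ρ else ρ / ((c : ℝ) - 1)) :
    noisyPairProb c T (fun i₁ j₁ i₂ j₂ => ¬ ((i₁ = i₂) ↔ (j₁ = j₂))) =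
        (2 / (c : ℝ)) * (2 * ρ - (c : ℝ) * ρ ^ 2 / ((c : ℝ) - 1)) ∧
      noisyPairProb c T (fun i₁ j₁ i₂ j₂ => ¬ ((i₁ = i₂) ↔ (j₁ = j₂))) =
        4 * ρ / (c : ℝ) - 2 * ρ ^ 2 / ((c : ℝ) - 1) := by
  classical
  have h2 : (2:ℝ) ≤ (c:ℝ) := by exact_mod_cast hc
  have hc0 : (c:ℝ) ≠ 0 := by linarith
  have hc1 : (c:ℝ) - 1 ≠ 0 := by linarith
  set k : ℝ := 1 / (c:ℝ)^2 with hk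
  set Eeq : ℝ := (1-ρ)^2 + ρ^2/((c:ℝ)-1) with hEeq
  set Ene : ℝ := 2*(1-ρ)*ρ/((c:ℝ)-1) + ((c:ℝ)-2)*(ρ/((c:ℝ)-1))^2 with hEne
  have hsum0 : ∀ (i : Fin c) (x : ℝ), (∑ j : Fin c, if i = j then x else 0) = x := by
    intro i x; simp
  -- row sums
  have hrow : ∀ i : Fin c, ∑ j : Fin c, T i j = 1 := by
    intro i
    have : ∀ j : Fin c, T i j = ρ/((c:ℝ)-1) + (if i = j then (1-ρ) - ρ/((c:ℝ)-1) else 0) := by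
      intro j; rw [hT]; split <;> ring
    rw [Finset.sum_congr rfl (fun j _ => this j), Finset.sum_add_distrib, hsum0,
      Finset.sum_const, Finset.card_univ, Fintype.card_fin, nsmul_eq_mul]
    field_simp
    ring
  -- equal-label mass
  have hE : ∀ i₁ i₂ : Fin c, (∑ j : Fin c, T i₁ j * T i₂ j) = if i₁ = i₂ then Eeq else Ene := by
    intro i₁ i₂
    by_cases h : i₁ = i₂
    · subst h
      have : ∀ j : Fin c, T i₁ j * T i₁ j =
          (ρ/((c:ℝ)-1))^2 + (if i₁ = j then (1-ρ)^2 - (ρ/((c:ℝ)-1))^2 else 0) := by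
        intro j; rw [hT]; split <;> ring
      rw [Finset.sum_congr rfl (fun j _ => this j), Finset.sum_add_distrib, hsum0,
        Finset.sum_const, Finset.card_univ, Fintype.card_fin, nsmul_eq_mul, if_pos rfl, hEeq]
      field_simp
      ring
    · have : ∀ j : Fin c, T i₁ j * T i₂ j =
          (ρ/((c:ℝ)-1))^2 + ((if i₁ = j then (1-ρ)*(ρ/((c:ℝ)-1)) - (ρ/((c:ℝ)-1))^2 else 0)
            + (if i₂ = j then (1-ρ)*(ρ/((c:ℝ)-1)) - (ρ/((c:ℝ)-1))^2 else 0)) := by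
        intro j; rw [hT, hT]
        split_ifs with h1 h2 h2
        · exact absurd (h1.trans h2.symm) h
        all_goals ring
      rw [Finset.sum_congr rfl (fun j _ => this j), Finset.sum_add_distrib,
        Finset.sum_add_distrib, hsum0, hsum0,
        Finset.sum_const, Finset.card_univ, Fintype.card_fin, nsmul_eq_mul, if_neg h, hEne]
      field_simp
      ring
  -- inner double sum over (j₁, j₂)
  have inner : ∀ i₁ i₂ : Fin c,
      (∑ j₁ : Fin c, ∑ j₂ : Fin c,
        if ¬ ((i₁ = i₂) ↔ (j₁ = j₂)) then k * T i₁ j₁ * T i₂ j₂ else 0) =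
      if i₁ = i₂ then k * (1 - Eeq) else k * Ene := by
    intro i₁ i₂
    by_cases h : i₁ = i₂
    · subst h
      have step : ∀ j₁ j₂ : Fin c,
          (if ¬ ((i₁ = i₁) ↔ (j₁ = j₂)) then k * T i₁ j₁ * T i₁ j₂ else 0) =
          k * T i₁ j₁ * T i₁ j₂ - (if j₁ = j₂ then k * T i₁ j₁ * T i₁ j₂ else 0) := by
        intro j₁ j₂; by_cases hj : j₁ = j₂ <;> simp [hj]
      calc (∑ j₁ : Fin c, ∑ j₂ : Fin c,
            if ¬ ((i₁ = i₁) ↔ (j₁ = j₂)) then k * T i₁ j₁ * T i₁ j₂ else 0)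
          = ∑ j₁ : Fin c, ((∑ j₂ : Fin c, k * T i₁ j₁ * T i₁ j₂)
              - ∑ j₂ : Fin c, (if j₁ = j₂ then k * T i₁ j₁ * T i₁ j₂ else 0)) := by
            refine Finset.sum_congr rfl fun j₁ _ => ?_
            rw [Finset.sum_congr rfl (fun j₂ _ => step j₁ j₂), Finset.sum_sub_distrib]
        _ = ∑ j₁ : Fin c, (k * T i₁ j₁ - k * (T i₁ j₁ * T i₁ j₁)) := by
            refine Finset.sum_congr rfl fun j₁ _ => ?_
            rw [← Finset.mul_sum, hrow, mul_one]
            congr 1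
            rw [Finset.sum_ite_eq Finset.univ j₁ (fun j₂ => k * T i₁ j₁ * T i₁ j₂)]
            simp [mul_assoc]
        _ = k * 1 - k * Eeq := by
            rw [Finset.sum_sub_distrib, ← Finset.mul_sum, ← Finset.mul_sum, hrow,
              hE i₁ i₁, if_pos rfl]
        _ = k * (1 - Eeq) := by ring
      · rw [if_pos rfl]
    · have step : ∀ j₁ j₂ : Fin c,
          (if ¬ ((i₁ = i₂) ↔ (j₁ = j₂)) then k * T i₁ j₁ * T i₂ j₂ else 0) =
          (if j₁ = j₂ then k * T i₁ j₁ * T i₂ j₂ else 0) := by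
        intro j₁ j₂; by_cases hj : j₁ = j₂ <;> simp [h, hj]
      rw [if_neg h]
      calc (∑ j₁ : Fin c, ∑ j₂ : Fin c,
            if ¬ ((i₁ = i₂) ↔ (j₁ = j₂)) then k * T i₁ j₁ * T i₂ j₂ else 0)
          = ∑ j₁ : Fin c, k * (T i₁ j₁ * T i₂ j₁) := by
            refine Finset.sum_congr rfl fun j₁ _ => ?_
            rw [Finset.sum_congr rfl (fun j₂ _ => step j₁ j₂),
              Finset.sum_ite_eq Finset.univ j₁ (fun j₂ => k * T i₁ j₁ * T i₂ j₂)]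
            simp [mul_assoc]
        _ = k * Ene := by rw [← Finset.mul_sum, hE i₁ i₂, if_neg h]
  -- assemble
  have key : noisyPairProb c T (fun i₁ j₁ i₂ j₂ => ¬ ((i₁ = i₂) ↔ (j₁ = j₂))) =
      (c:ℝ)^2 * (k * Ene) + (c:ℝ) * (k * (1 - Eeq) - k * Ene) := by
    have unfolded : noisyPairProb c T (fun i₁ j₁ i₂ j₂ => ¬ ((i₁ = i₂) ↔ (j₁ = j₂))) =
        ∑ i₁ : Fin c, ∑ j₁ : Fin c, ∑ i₂ : Fin c, ∑ j₂ : Fin c,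
          if ¬ ((i₁ = i₂) ↔ (j₁ = j₂)) then (1/(c:ℝ)^2) * T i₁ j₁ * T i₂ j₂ else 0 := by
      unfold noisyPairProb
      refine Finset.sum_congr rfl fun i₁ _ => Finset.sum_congr rfl fun j₁ _ =>
        Finset.sum_congr rfl fun i₂ _ => Finset.sum_congr rfl fun j₂ _ => ?_
      by_cases h : (i₁ = i₂ ↔ j₁ = j₂) <;> simp [h]
    rw [unfolded]
    have swap : ∀ i₁ : Fin c,
        (∑ j₁ : Fin c, ∑ i₂ : Fin c, ∑ j₂ : Fin c,
          if ¬ ((i₁ = i₂) ↔ (j₁ = j₂)) then (1/(c:ℝ)^2) * T i₁ j₁ * T i₂ j₂ else 0) =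
        ∑ i₂ : Fin c, ∑ j₁ : Fin c, ∑ j₂ : Fin c,
          if ¬ ((i₁ = i₂) ↔ (j₁ = j₂)) then (1/(c:ℝ)^2) * T i₁ j₁ * T i₂ j₂ else 0 :=
      fun i₁ => Finset.sum_comm
    rw [Finset.sum_congr rfl (fun i₁ _ => swap i₁)]
    have : ∀ i₁ i₂ : Fin c,
        (∑ j₁ : Fin c, ∑ j₂ : Fin c,
          if ¬ ((i₁ = i₂) ↔ (j₁ = j₂)) then (1/(c:ℝ)^2) * T i₁ j₁ * T i₂ j₂ else 0) =
        k * Ene + (if i₁ = i₂ then k * (1 - Eeq) - k * Ene else 0) := by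
      intro i₁ i₂
      rw [inner i₁ i₂]
      split <;> ring
    rw [Finset.sum_congr rfl (fun i₁ _ => Finset.sum_congr rfl (fun i₂ _ => this i₁ i₂))]
    simp only [Finset.sum_add_distrib, hsum0, Finset.sum_const, Finset.card_univ,
      Fintype.card_fin, nsmul_eq_mul]
    ring
  constructor
  · rw [key, hk, hEeq, hEne]; field_simp; ring
  · rw [key, hk, hEeq, hEne]; field_simp; ring
end

section
/- Let c ≥ 4 and let T be the symmetric-noise class transition matrix with noise rate ρ ∈ (0, 1), i.e., T_{ii} = 1 − ρ for all i and T_{ij} = ρ/(c − 1) for i ≠ j. Then in the noisy-pair model the similarity noise rate is strictly lower than the class noise rate: P(H̄ ≠ H) < ρ. -/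
open Finset

theorem Finset.sum_ite_eq_add_card_sub_one_mul {ι R : Type*} [Fintype ι] [DecidableEq ι] [Ring R]
    (i : ι) (a b : R) :
    ∑ j, (if i = j then a else b) = a + (Fintype.card ι - 1) * b := by
  simp only [sum_ite, filter_eq, mem_univ, ↓reduceIte, sum_const, card_singleton, one_smul,
    filter_ne, card_erase_of_mem, card_univ, nsmul_eq_mul,
    Nat.cast_pred (Fintype.card_pos_iff.2 ⟨i⟩)]

noncomputable def simNoiseRate (c : ℕ) (T : Matrix (Fin c) (Fin c) ℝ) : ℝ :=
  noisyPairProb c T (fun i₁ j₁ i₂ j₂ => ¬ ((i₁ = i₂) ↔ (j₁ = j₂)))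

section NoisyPair

variable {c : ℕ} (T : Matrix (Fin c) (Fin c) ℝ)

theorem noisyPairProb_not_iff (A B : Fin c → Fin c → Fin c → Fin c → Prop) :
    noisyPairProb c T (fun i₁ j₁ i₂ j₂ => ¬ (A i₁ j₁ i₂ j₂ ↔ B i₁ j₁ i₂ j₂)) =
      noisyPairProb c T A + noisyPairProb c T B -
        2 * noisyPairProb c T (fun i₁ j₁ i₂ j₂ => A i₁ j₁ i₂ j₂ ∧ B i₁ j₁ i₂ j₂) := by
  simp only [noisyPairProb, mul_sum, ← sum_add_distrib, ← sum_sub_distrib]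
  refine sum_congr rfl fun _ _ => sum_congr rfl fun _ _ => sum_congr rfl fun _ _ =>
    sum_congr rfl fun _ _ => ?_
  split_ifs <;> first | (exfalso; tauto) | ring

theorem noisyPairProb_sameClean :
    noisyPairProb c T (fun i₁ _ i₂ _ => i₁ = i₂) = (∑ i, (∑ j, T i j) ^ 2) / c ^ 2 := by
  simp only [noisyPairProb, sq, one_div, mul_inv_rev, sum_ite_irrel, sum_const_zero, sum_ite_eq,
    mem_univ, ↓reduceIte, sum_mul_sum, sum_div]
  exact sum_congr rfl fun _ _ => sum_congr rfl fun _ _ => sum_congr rfl fun _ _ => by ring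

theorem noisyPairProb_sameNoisy :
    noisyPairProb c T (fun _ j₁ _ j₂ => j₁ = j₂) = (∑ j, (∑ i, T i j) ^ 2) / c ^ 2 := by
  simp only [noisyPairProb, sq, one_div, mul_inv_rev, sum_ite_eq, mem_univ, ↓reduceIte,
    sum_mul_sum, sum_div]
  rw [sum_comm]
  exact sum_congr rfl fun _ _ => sum_congr rfl fun _ _ => sum_congr rfl fun _ _ => by ring

theorem noisyPairProb_sameClean_and_sameNoisy :
    noisyPairProb c T (fun i₁ j₁ i₂ j₂ => i₁ = i₂ ∧ j₁ = j₂) = (∑ i, ∑ j, T i j ^ 2) / c ^ 2 := by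
  simp only [noisyPairProb, sq, one_div, mul_inv_rev, ite_and, sum_ite_irrel, sum_ite_eq,
    mem_univ, ↓reduceIte, sum_const_zero, sum_div]
  exact sum_congr rfl fun _ _ => sum_congr rfl fun _ _ => by ring

theorem simNoiseRate_eq_sum_sq :
    simNoiseRate c T =
      (∑ i, (∑ j, T i j) ^ 2 + ∑ j, (∑ i, T i j) ^ 2 - 2 * ∑ i, ∑ j, T i j ^ 2) / c ^ 2 := by
  rw [simNoiseRate, noisyPairProb_not_iff, noisyPairProb_sameClean, noisyPairProb_sameNoisy,
    noisyPairProb_sameClean_and_sameNoisy]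
  ring

end NoisyPair

section DiagonalPlusConstant

variable {c : ℕ} {T : Matrix (Fin c) (Fin c) ℝ} {a b : ℝ}
  (hT : ∀ i j, T i j = if i = j then a else b)
include hT

theorem sum_row_eq_of_eq_ite (i : Fin c) : ∑ j, T i j = a + (c - 1) * b := by
  simp only [hT, sum_ite_eq_add_card_sub_one_mul, Fintype.card_fin]

theorem sum_col_eq_of_eq_ite (j : Fin c) : ∑ i, T i j = a + (c - 1) * b := by
  simp only [hT, eq_comm (b := j), sum_ite_eq_add_card_sub_one_mul, Fintype.card_fin]

theorem sum_sum_sq_eq_of_eq_ite : ∑ i, ∑ j, T i j ^ 2 = c * (a ^ 2 + (c - 1) * b ^ 2) := by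
  simp only [hT, apply_ite (· ^ 2), sum_ite_eq_add_card_sub_one_mul, Fintype.card_fin,
    sum_const, card_univ, nsmul_eq_mul]

theorem simNoiseRate_eq_of_eq_ite :
    simNoiseRate c T = 2 * ((c - 1) * b) * (2 * a + (c - 2) * b) / c := by
  rw [simNoiseRate_eq_sum_sq, sum_sum_sq_eq_of_eq_ite hT]
  simp only [sum_row_eq_of_eq_ite hT, sum_col_eq_of_eq_ite hT, sum_const, card_univ,
    Fintype.card_fin, nsmul_eq_mul]
  rcases eq_or_ne (c : ℝ) 0 with hc | hc
  · simp [hc]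
  · field_simp
    ring

end DiagonalPlusConstant

theorem symmetric_simiNoise_lt_general (c : ℕ) (hc : 4 ≤ c) (ρ : ℝ) (hρ : 0 < ρ)
    (T : Matrix (Fin c) (Fin c) ℝ)
    (hT : ∀ i j, T i j = if i = j then 1 - ρ else ρ / ((c : ℝ) - 1)) :
    noisyPairProb c T (fun i₁ j₁ i₂ j₂ => ¬ ((i₁ = i₂) ↔ (j₁ = j₂))) < ρ := by
  have hc4 : (4 : ℝ) ≤ c := by exact_mod_cast hc
  have hc1 : (c : ℝ) - 1 ≠ 0 := by linarith
  change simNoiseRate c T < ρ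
  rw [simNoiseRate_eq_of_eq_ite hT, mul_div_cancel₀ _ hc1, div_lt_iff₀ (by linarith)]
  have key : 2 * (1 - ρ) + (c - 2) * (ρ / (c - 1)) = 2 - c * ρ / (c - 1) := by
    field_simp
    ring
  have : 0 < c * ρ / (c - 1) := div_pos (by positivity) (by linarith)
  rw [key]
  nlinarith

/-- For symmetric noise with rate `ρ ∈ (0, 1)` and `c ≥ 4`, the similarity noise rate is
strictly lower than the class noise rate `ρ`. -/
theorem symmetric_simiNoise_lt (c : ℕ) (hc : 4 ≤ c) (ρ : ℝ) (hρ : 0 < ρ) (hρ1 : ρ < 1)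
    (T : Matrix (Fin c) (Fin c) ℝ)
    (hT : ∀ i j, T i j = if i = j then 1 - ρ else ρ / ((c : ℝ) - 1)) :
    noisyPairProb c T (fun i₁ j₁ i₂ j₂ => ¬ ((i₁ = i₂) ↔ (j₁ = j₂))) < ρ :=
  symmetric_simiNoise_lt_general c hc ρ hρ T hT
end
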